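/- arXiv:2601.02162 — 4 statements merged into one kernel-verified Lean document; each statement's English description precedes it below -/
import Mathlib

section
/- Let q be a prime power, F a field which is an 𝔽_q-algebra, F^s a separable closure of F, z ∈ F, and φ_T(X) = zX + g₁X^q + ⋯ + g_rX^{q^r} ∈ F[X] with g_r ≠ 0, r ≥ 1. Let G ⊆ F^s be a finite 𝔽_q-linear subspace which is stable under every field automorphism of F^s fixing F pointwise and satisfies φ_T(G) ⊆ G. Then there exist a q-linearized polynomial u ∈ F[X] whose coefficient of X equals 1 and whose set of roots in F^s is exactly G, and a q-linearized polynomial ψ_T ∈ F[X] whose coefficient of X equals z, such that u ∘ φ_T = ψ_T ∘ u (polynomial composition). In other words, G is the kernel of a separable isogeny with domain φ. -/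
open Polynomial

namespace KGSI

/-- `q`-linearized polynomial: support consists of powers of `q`. -/
def L (q : ℕ) {R : Type*} [Semiring R] (f : R[X]) : Prop :=
  ∀ m ∈ f.support, ∃ i : ℕ, m = q ^ i

variable {q : ℕ} {K : Type*} [Field K]

lemma L_zero : L q (0 : K[X]) := by simp [L]

lemma L_X : L q (X : K[X]) := by
  intro m hm
  rw [mem_support_iff, coeff_X] at hm
  refine ⟨0, ?_⟩
  rw [pow_zero]
  by_contra h
  rw [if_neg (fun hh => h hh.symm)] at hm
  exact hm rfl

lemma L.add {f g : K[X]} (hf : L q f) (hg : L q g) : L q (f + g) := by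
  intro m hm
  rcases Finset.mem_union.1 (support_add hm) with h | h
  · exact hf m h
  · exact hg m h

lemma L.neg {f : K[X]} (hf : L q f) : L q (-f) := by
  intro m hm
  rw [support_neg] at hm
  exact hf m hm

lemma L.sub {f g : K[X]} (hf : L q f) (hg : L q g) : L q (f - g) := by
  rw [sub_eq_add_neg]; exact hf.add hg.neg

lemma L.C_mul {f : K[X]} (hf : L q f) (a : K) : L q (C a * f) := by
  intro m hm
  apply hf m
  rw [mem_support_iff] at hm ⊢
  intro h
  rw [coeff_C_mul, h, mul_zero] at hm
  exact hm rfl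

lemma L_C_mul_X_pow (a : K) (i : ℕ) : L q (C a * X ^ q ^ i : K[X]) := by
  intro m hm
  rw [mem_support_iff, coeff_C_mul, coeff_X_pow] at hm
  refine ⟨i, ?_⟩
  by_contra h
  rw [if_neg (by exact fun hh => h hh)] at hm
  simp at hm

lemma L.sum {ι : Type*} (s : Finset ι) (F : ι → K[X]) (h : ∀ i ∈ s, L q (F i)) :
    L q (∑ i ∈ s, F i) := by
  classical
  induction s using Finset.induction_on with
  | empty => simpa using L_zero
  | insert _ _ hns ih =>
    rw [Finset.sum_insert hns]
    exact (h _ (Finset.mem_insert_self _ _)).add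
      (ih fun i hi => h i (Finset.mem_insert_of_mem hi))

lemma L.coeff_zero (hq2 : 2 ≤ q) {f : K[X]} (hf : L q f) : f.coeff 0 = 0 := by
  by_contra h
  obtain ⟨i, hi⟩ := hf 0 (mem_support_iff.2 h)
  have : 0 < q ^ i := pow_pos (by omega) i
  omega

section CharStuff
variable {p k : ℕ} [Fact p.Prime] [CharP K p]

lemma L.pow_q (hk : q = p ^ k) {f : K[X]} (hf : L q f) : L q (f ^ q) := by
  have hq0 : 0 < q := hk ▸ pow_pos (Fact.out (p := p.Prime)).pos k
  intro m hm
  have h := Polynomial.map_iterateFrobenius_expand (p := p) f k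
  rw [← hk] at h
  rw [← h, mem_support_iff, Polynomial.coeff_map] at hm
  have hm' : (expand K q f).coeff m ≠ 0 := fun hz => by rw [hz] at hm; simp at hm
  rw [Polynomial.coeff_expand hq0] at hm'
  by_cases hdvd : q ∣ m
  · rw [if_pos hdvd] at hm'
    obtain ⟨i, hi⟩ := hf (m / q) (mem_support_iff.2 hm')
    exact ⟨i + 1, by rw [← Nat.div_mul_cancel hdvd, hi, pow_succ]⟩
  · rw [if_neg hdvd] at hm'
    exact absurd rfl hm'

lemma L.pow_q_pow (hk : q = p ^ k) {f : K[X]} (hf : L q f) (j : ℕ) : L q (f ^ q ^ j) := by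
  induction j with
  | zero => simpa using hf
  | succ j ih =>
    rw [pow_succ, pow_mul]
    exact ih.pow_q hk

lemma L.comp (hk : q = p ^ k) {f g : K[X]} (hf : L q f) (hg : L q g) : L q (f.comp g) := by
  rw [comp_eq_sum_left, Polynomial.sum_def]
  apply L.sum
  intro e he
  obtain ⟨i, rfl⟩ := hf e he
  exact (hg.pow_q_pow hk i).C_mul _

lemma L.comp_X_sub_C (hk : q = p ^ k) {f : K[X]} (hf : L q f) (c : K) :
    f.comp (X - C c) = f - C (f.eval c) := by
  conv_lhs => rw [comp_eq_sum_left, Polynomial.sum_def]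
  have key : ∀ m ∈ f.support,
      C (f.coeff m) * (X - C c) ^ m = C (f.coeff m) * X ^ m - C (f.coeff m * c ^ m) := by
    intro m hm
    obtain ⟨i, rfl⟩ := hf m hm
    have hpow : ((X : K[X]) - C c) ^ q ^ i = X ^ q ^ i - C c ^ q ^ i := by
      rw [hk, ← pow_mul]
      exact sub_pow_char_pow X (C c) (k * i)
    rw [hpow, mul_sub, ← Polynomial.C_pow, ← Polynomial.C_mul]
  rw [Finset.sum_congr rfl key, Finset.sum_sub_distrib]
  congr 1
  · conv_rhs => rw [← f.sum_C_mul_X_pow_eq]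
    rw [Polynomial.sum_def]
  · rw [eval_eq_sum, Polynomial.sum_def, map_sum]

end CharStuff

section FqStuff

variable {q : ℕ} {K : Type*} [Field K]
variable {Fq : Type*} [Field Fq] [Fintype Fq] [Algebra Fq K]

lemma alg_pow_q_pow (hq : Fintype.card Fq = q) (a : Fq) (i : ℕ) :
    (algebraMap Fq K a) ^ q ^ i = algebraMap Fq K a := by
  induction i with
  | zero => simp
  | succ i ih =>
    rw [pow_succ, pow_mul, ih, ← map_pow]
    congr 1
    rw [← hq]
    exact FiniteField.pow_card a

lemma L.eval_mul_alg (hq : Fintype.card Fq = q) {f : K[X]} (hf : L q f) (a : Fq) (x : K) :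
    f.eval (algebraMap Fq K a * x) = algebraMap Fq K a * f.eval x := by
  rw [eval_eq_sum, eval_eq_sum, Polynomial.sum_def, Polynomial.sum_def, Finset.mul_sum]
  apply Finset.sum_congr rfl
  intro m hm
  obtain ⟨i, rfl⟩ := hf m hm
  rw [mul_pow, alg_pow_q_pow hq]
  ring

lemma prod_identity (hq : Fintype.card Fq = q) {e : K} (he : e ≠ 0) :
    ∏ a : Fq, (X - Polynomial.C (algebraMap Fq K a * e)) =
      X ^ q - Polynomial.C (e ^ (q - 1)) * X := by
  have hq2 : 2 ≤ q := hq ▸ Fintype.one_lt_card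
  set Pl : K[X] := ∏ a : Fq, (X - Polynomial.C (algebraMap Fq K a * e)) with hPl
  set Pr : K[X] := X ^ q - Polynomial.C (e ^ (q - 1)) * X with hPr
  have hinj : Function.Injective (fun a : Fq => algebraMap Fq K a * e) := by
    intro a b hab
    simp only [mul_eq_mul_right_iff, he, or_false] at hab
    exact (algebraMap Fq K).injective hab
  have hPrdegaux : (Polynomial.C (e ^ (q - 1)) * X : K[X]).degree ≤ 1 := by
    calc (Polynomial.C (e ^ (q - 1)) * X : K[X]).degree
        ≤ (Polynomial.C (e ^ (q-1)) : K[X]).degree + (X : K[X]).degree := Polynomial.degree_mul_le _ _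
      _ ≤ 0 + 1 := add_le_add Polynomial.degree_C_le Polynomial.degree_X_le
      _ = 1 := by simp
  have hdegaux2 : (Polynomial.C (e ^ (q - 1)) * X : K[X]).degree < (q : ℕ) := by
    refine lt_of_le_of_lt hPrdegaux ?_
    exact_mod_cast Nat.one_lt_cast.mpr (by omega)
  have hPrmonic : Pr.Monic := Polynomial.monic_X_pow_sub hdegaux2
  have hPldeg : Pl.natDegree = q := by
    rw [hPl, Polynomial.natDegree_prod _ _ (fun a _ => Polynomial.X_sub_C_ne_zero _)]
    rw [Finset.sum_congr rfl (fun a _ => Polynomial.natDegree_X_sub_C (algebraMap Fq K a * e))]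
    simp [hq]
  have hPlmonic : Pl.Monic :=
    Polynomial.monic_prod_of_monic _ _ (fun a _ => Polynomial.monic_X_sub_C _)
  have hPrdeg : Pr.natDegree = q := by
    have : Pr.degree = (q : ℕ) := by
      rw [hPr]
      rw [Polynomial.degree_sub_eq_left_of_degree_lt]
      · exact Polynomial.degree_X_pow q
      · rwa [Polynomial.degree_X_pow]
    exact Polynomial.natDegree_eq_of_degree_eq_some this
  have heval : ∀ a : Fq, Polynomial.eval (algebraMap Fq K a * e) (Pl - Pr) = 0 := by
    intro a
    have h1 : Polynomial.eval (algebraMap Fq K a * e) Pl = 0 := by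
      rw [hPl, Polynomial.eval_prod]
      apply Finset.prod_eq_zero (Finset.mem_univ a)
      simp
    have h2 : Polynomial.eval (algebraMap Fq K a * e) Pr = 0 := by
      rw [hPr]
      simp only [Polynomial.eval_sub, Polynomial.eval_pow, Polynomial.eval_X,
        Polynomial.eval_mul, Polynomial.eval_C]
      rw [mul_pow]
      have ha : (algebraMap Fq K a) ^ q = algebraMap Fq K a := by
        simpa using alg_pow_q_pow (K := K) hq a 1
      have heq : e ^ (q - 1) * e = e ^ q := by
        rw [← pow_succ]
        congr 1
        omega
      rw [ha, ← heq]
      ring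
    rw [Polynomial.eval_sub, h1, h2, sub_zero]
  by_cases hD : Pl - Pr = 0
  · exact sub_eq_zero.mp hD
  have hdlt : (Pl - Pr).natDegree < q := by
    have hdeg : (Pl - Pr).degree < Pl.degree :=
      Polynomial.degree_sub_lt
        (by rw [Polynomial.degree_eq_natDegree hPlmonic.ne_zero,
             Polynomial.degree_eq_natDegree hPrmonic.ne_zero, hPldeg, hPrdeg])
        hPlmonic.ne_zero
        (by rw [hPlmonic.leadingCoeff, hPrmonic.leadingCoeff])
    have := Polynomial.natDegree_lt_natDegree hD hdeg
    omega
  have := Polynomial.eq_zero_of_natDegree_lt_card_of_eval_eq_zero (Pl - Pr) hinj heval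
    (by rw [hq]; exact hdlt)
  exact absurd this hD

end FqStuff

section ProdG

variable {q p k : ℕ} {K : Type*} [Field K] {Fq : Type*} [Field Fq] [Fintype Fq] [Algebra Fq K]
variable [Fact p.Prime] [CharP K p]

lemma prod_G_lin (hq : Fintype.card Fq = q) (hk : q = p ^ k)
    (G : Submodule Fq K) (hfin : (G : Set K).Finite) :
    L q (∏ x ∈ hfin.toFinset, (X - Polynomial.C x)) := by
  classical
  suffices h : ∀ n : ℕ, ∀ (G : Submodule Fq K) (hfin : (G : Set K).Finite),
      hfin.toFinset.card = n → L q (∏ x ∈ hfin.toFinset, (X - Polynomial.C x)) from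
    h _ G hfin rfl
  intro n
  induction n using Nat.strong_induction_on with
  | _ n ih =>
  intro G hfin hcard
  by_cases hbot : G = ⊥
  · subst hbot
    have hT : hfin.toFinset = {0} := by
      ext x
      simp [Set.Finite.mem_toFinset]
    rw [hT, Finset.prod_singleton, Polynomial.C_0, sub_zero]
    exact L_X
  · obtain ⟨g₀, hg₀G, hg₀⟩ := (Submodule.ne_bot_iff G).mp hbot
    set gg : ↥G := ⟨g₀, hg₀G⟩ with hggdef
    have hggne : gg ≠ 0 := fun h => hg₀ (by simpa [hggdef] using congrArg Subtype.val h)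
    obtain ⟨Hh, hcompl⟩ := Submodule.exists_isCompl (Submodule.span Fq {gg})
    set H : Submodule Fq K := Hh.map G.subtype with hHdef
    have hHG : H ≤ G := Submodule.map_subtype_le G Hh
    have hfinH : (H : Set K).Finite := hfin.subset hHG
    have hg₀H : g₀ ∉ H := by
      intro hmem
      rw [hHdef, Submodule.mem_map] at hmem
      obtain ⟨y, hy, hyx⟩ := hmem
      have hygg : y = gg := Subtype.ext (by rw [hggdef]; exact hyx)
      have : gg ∈ Submodule.span Fq {gg} ⊓ Hh :=
        ⟨Submodule.mem_span_singleton_self _, hygg ▸ hy⟩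
      rw [hcompl.inf_eq_bot] at this
      exact hggne (by simpa using this)
    have hdecomp : ∀ x ∈ G, ∃ h ∈ H, ∃ a : Fq, x = h + algebraMap Fq K a * g₀ := by
      intro x hx
      have hmem : (⟨x, hx⟩ : ↥G) ∈ Submodule.span Fq {gg} ⊔ Hh := by
        rw [hcompl.sup_eq_top]; trivial
      rw [Submodule.mem_sup] at hmem
      obtain ⟨s, hs, y, hy, hsy⟩ := hmem
      obtain ⟨a, ha⟩ := Submodule.mem_span_singleton.mp hs
      refine ⟨y, Submodule.mem_map_of_mem hy, a, ?_⟩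
      have hval : (s : K) + (y : K) = x := congrArg Subtype.val hsy
      have hsval : (s : K) = algebraMap Fq K a * g₀ := by
        rw [← ha]
        simp [Algebra.smul_def, hggdef]
      rw [← hval, hsval]
      ring
    have hinj : ∀ h₁ ∈ H, ∀ h₂ ∈ H, ∀ a₁ a₂ : Fq,
        h₁ + algebraMap Fq K a₁ * g₀ = h₂ + algebraMap Fq K a₂ * g₀ → h₁ = h₂ ∧ a₁ = a₂ := by
      intro h₁ hh₁ h₂ hh₂ a₁ a₂ heq
      by_cases haa : a₁ = a₂
      · subst haa
        exact ⟨add_right_cancel heq, rfl⟩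
      · exfalso
        apply hg₀H
        have h2 : h₁ - h₂ = algebraMap Fq K (a₂ - a₁) * g₀ := by
          rw [map_sub]
          have := heq
          ring_nf
          ring_nf at this
          linear_combination this
        have hgeq : g₀ = algebraMap Fq K (a₂ - a₁)⁻¹ * (h₁ - h₂) := by
          rw [h2, ← mul_assoc, ← map_mul, inv_mul_cancel₀ (sub_ne_zero.mpr (Ne.symm haa)),
            map_one, one_mul]
        rw [hgeq, ← Algebra.smul_def]
        exact H.smul_mem _ (H.sub_mem hh₁ hh₂)
    -- the smaller product
    set WH : K[X] := ∏ x ∈ hfinH.toFinset, (X - Polynomial.C x) with hWHdef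
    have hcardlt : hfinH.toFinset.card < n := by
      rw [← hcard]
      apply Finset.card_lt_card
      constructor
      · intro x hx
        exact hfin.mem_toFinset.mpr (hHG (hfinH.mem_toFinset.mp hx))
      · intro hsub
        exact hg₀H (hfinH.mem_toFinset.mp (hsub (hfin.mem_toFinset.mpr hg₀G)))
    have ihWH : L q WH := ih _ hcardlt H hfinH rfl
    have he₀ : WH.eval g₀ ≠ 0 := by
      rw [hWHdef, Polynomial.eval_prod]
      apply Finset.prod_ne_zero_iff.mpr
      intro h hh
      simp only [Polynomial.eval_sub, Polynomial.eval_X, Polynomial.eval_C]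
      intro hz
      exact hg₀H (by rw [sub_eq_zero.mp hz]; exact hfinH.mem_toFinset.mp hh)
    have step1 : ∏ x ∈ hfin.toFinset, (X - Polynomial.C x)
        = ∏ pr ∈ (hfinH.toFinset ×ˢ (Finset.univ : Finset Fq)),
            (X - Polynomial.C (pr.1 + algebraMap Fq K pr.2 * g₀)) := by
      refine (Finset.prod_bij (fun pr _ => pr.1 + algebraMap Fq K pr.2 * g₀) ?_ ?_ ?_ ?_).symm
      · intro pr hpr
        obtain ⟨h1, _⟩ := Finset.mem_product.mp hpr
        rw [Set.Finite.mem_toFinset]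
        exact G.add_mem (hHG (hfinH.mem_toFinset.mp h1))
          (by rw [← Algebra.smul_def]; exact G.smul_mem _ hg₀G)
      · intro pr₁ hpr₁ pr₂ hpr₂ heq
        obtain ⟨h1, _⟩ := Finset.mem_product.mp hpr₁
        obtain ⟨h2, _⟩ := Finset.mem_product.mp hpr₂
        have := hinj _ (hfinH.mem_toFinset.mp h1) _ (hfinH.mem_toFinset.mp h2) _ _ heq
        exact Prod.ext this.1 this.2
      · intro b hb
        obtain ⟨h, hh, a, hba⟩ := hdecomp b (hfin.mem_toFinset.mp hb)
        exact ⟨(h, a), Finset.mem_product.mpr ⟨hfinH.mem_toFinset.mpr hh, Finset.mem_univ _⟩,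
          hba.symm⟩
      · intro pr hpr
        rfl
    rw [step1, Finset.prod_product_right]
    have inner : ∀ a : Fq,
        (∏ h ∈ hfinH.toFinset, (X - Polynomial.C (h + algebraMap Fq K a * g₀)))
          = WH - Polynomial.C (algebraMap Fq K a * WH.eval g₀) := by
      intro a
      have hfac : ∀ h ∈ hfinH.toFinset, X - Polynomial.C (h + algebraMap Fq K a * g₀)
          = (X - Polynomial.C h).comp (X - Polynomial.C (algebraMap Fq K a * g₀)) := by
        intro h _
        rw [Polynomial.sub_comp, Polynomial.X_comp, Polynomial.C_comp, map_add]
        ring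
      rw [Finset.prod_congr rfl hfac, ← Polynomial.prod_comp]
      rw [← hWHdef, ihWH.comp_X_sub_C hk, ihWH.eval_mul_alg hq]
    rw [Finset.prod_congr rfl (fun a _ => inner a)]
    have hfinal : ∏ a : Fq, (WH - Polynomial.C (algebraMap Fq K a * WH.eval g₀))
        = WH ^ q - Polynomial.C ((WH.eval g₀) ^ (q - 1)) * WH := by
      have hid := congrArg (fun P : K[X] => P.comp WH) (prod_identity (K := K) hq he₀)
      simp only [Polynomial.prod_comp, Polynomial.sub_comp, Polynomial.X_comp,
        Polynomial.C_comp, Polynomial.pow_comp, Polynomial.mul_comp] at hid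
      exact hid
    rw [hfinal]
    exact (ihWH.pow_q hk).sub (ihWH.C_mul _)

end ProdG

section Descent

variable {F Fs : Type*} [Field F] [Field Fs] [Algebra F Fs] [IsSepClosure F Fs]

lemma fixed_mem_range (x : Fs) (hx : ∀ σ : Fs ≃ₐ[F] Fs, σ x = x) :
    x ∈ (algebraMap F Fs).range := by
  classical
  have hint : IsIntegral F x := Algebra.IsIntegral.isIntegral x
  rw [← minpoly.degree_eq_one_iff]
  have hsep : (minpoly F x).Separable := Algebra.IsSeparable.isSeparable F x
  have hsplits : Polynomial.Splits ((minpoly F x).map (algebraMap F Fs)) :=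
    Normal.splits inferInstance x
  have hndeg := hsplits.natDegree_eq_card_roots
  rw [Polynomial.natDegree_map] at hndeg
  set R := ((minpoly F x).map (algebraMap F Fs)).roots with hR
  have hnodup : R.Nodup := Polynomial.nodup_roots (hsep.map)
  have hall : ∀ w ∈ R, w = x := by
    intro w hw
    have hw0 : Polynomial.aeval w (minpoly F x) = 0 := by
      rw [Polynomial.aeval_def, ← Polynomial.eval_map]
      exact (Polynomial.mem_roots'.mp hw).2
    obtain ⟨σ, hσ⟩ := minpoly.exists_algEquiv_of_root hint.isAlgebraic hw0
    exact σ.injective (by rw [hσ, hx σ])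
  have hsub : R.toFinset ⊆ {x} := by
    intro w hw
    rw [Finset.mem_singleton]
    exact hall w (Multiset.mem_toFinset.mp hw)
  have hcard1 : Multiset.card R ≤ 1 := by
    rw [← Multiset.toFinset_card_of_nodup hnodup]
    simpa using Finset.card_le_card hsub
  have hdeg1 : (minpoly F x).natDegree = 1 := by
    have := minpoly.natDegree_pos hint
    omega
  have := (Polynomial.degree_eq_iff_natDegree_eq (minpoly.ne_zero hint)).mpr hdeg1
  exact_mod_cast this

end Descent

section Div

lemma L.eq_zero_of_natDegree_eq_zero {q : ℕ} (hq2 : 2 ≤ q) {K : Type*} [Field K] {f : K[X]}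
    (hf : L q f) (h : f.natDegree = 0) : f = 0 := by
  by_contra h0
  obtain ⟨i, hi⟩ := hf _ (Polynomial.natDegree_mem_support_of_nonzero h0)
  rw [h] at hi
  have : 0 < q ^ i := pow_pos (by omega) i
  omega

variable {q p k : ℕ} {F Fs : Type*} [Field F] [Field Fs] [Algebra F Fs]
variable [Fact p.Prime] [CharP F p]

lemma ore_div (hq2 : 2 ≤ q) (hk : q = p ^ k)
    (G : Finset Fs) {d : ℕ} (hcard : G.card = q ^ d)
    (u : F[X]) (hu : L q u) (hud : u.natDegree = q ^ d)
    (hroots : ∀ x ∈ G, Polynomial.aeval x u = 0)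
    (f : F[X]) (hf : L q f) (hfz : ∀ x ∈ G, Polynomial.aeval x f = 0) :
    ∃ ψ : F[X], L q ψ ∧ f = ψ.comp u := by
  have hune : u ≠ 0 := by
    intro h
    rw [h, Polynomial.natDegree_zero] at hud
    have : 0 < q ^ d := pow_pos (by omega) d
    omega
  suffices key : ∀ n : ℕ, ∀ f : F[X], f.natDegree ≤ n → L q f →
      (∀ x ∈ G, Polynomial.aeval x f = 0) → ∃ ψ : F[X], L q ψ ∧ f = ψ.comp u from
    key f.natDegree f le_rfl hf hfz
  clear hf hfz f
  intro n
  induction n using Nat.strong_induction_on with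
  | _ n ihn =>
  intro f hfn hf hfz
  by_cases hf0 : f = 0
  · exact ⟨0, L_zero, by rw [hf0, Polynomial.zero_comp]⟩
  obtain ⟨j, hj⟩ := hf f.natDegree (Polynomial.natDegree_mem_support_of_nonzero hf0)
  have hmap0 : f.map (algebraMap F Fs) ≠ 0 :=
    (Polynomial.map_ne_zero_iff (algebraMap F Fs).injective).mpr hf0
  have hsub : G.val ⊆ (f.map (algebraMap F Fs)).roots := by
    intro x hxm
    rw [Polynomial.mem_roots hmap0, Polynomial.IsRoot.def, Polynomial.eval_map,
      ← Polynomial.aeval_def]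
    exact hfz x hxm
  have hdle : q ^ d ≤ f.natDegree := by
    have h1 := Polynomial.card_le_degree_of_subset_roots hsub
    rwa [hcard, Polynomial.natDegree_map_eq_of_injective (algebraMap F Fs).injective] at h1
  have hdj : d ≤ j := by
    rw [hj] at hdle
    exact (Nat.pow_le_pow_iff_right (by omega)).mp hdle
  set e := q ^ (j - d) with he
  have hepos : 0 < e := pow_pos (by omega) _
  set c : F := f.leadingCoeff / (u.leadingCoeff ^ e) with hc
  have hc0 : c ≠ 0 := div_ne_zero (Polynomial.leadingCoeff_ne_zero.mpr hf0)
    (pow_ne_zero _ (Polynomial.leadingCoeff_ne_zero.mpr hune))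
  set h : F[X] := Polynomial.C c * u ^ e with hhdef
  have hne0 : h ≠ 0 := mul_ne_zero (by simpa using hc0) (pow_ne_zero _ hune)
  have hhdeg : h.natDegree = f.natDegree := by
    rw [hhdef, Polynomial.natDegree_C_mul hc0, Polynomial.natDegree_pow, hud, he,
      ← pow_add, Nat.sub_add_cancel hdj, hj]
  have hhlc : h.leadingCoeff = f.leadingCoeff := by
    rw [hhdef, Polynomial.leadingCoeff_mul, Polynomial.leadingCoeff_C,
      Polynomial.leadingCoeff_pow, hc, div_mul_cancel₀]
    exact pow_ne_zero _ (Polynomial.leadingCoeff_ne_zero.mpr hune)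
  have hL_h : L q h := by
    rw [hhdef, he]
    exact (hu.pow_q_pow hk _).C_mul _
  have hfz' : ∀ x ∈ G, Polynomial.aeval x (f - h) = 0 := by
    intro x hx
    rw [map_sub, hfz x hx, zero_sub, hhdef, map_mul, map_pow, hroots x hx,
      zero_pow hepos.ne', mul_zero, neg_zero]
  by_cases hfh : f - h = 0
  · refine ⟨Polynomial.C c * X ^ e, by rw [he]; exact L_C_mul_X_pow c (j - d), ?_⟩
    rw [Polynomial.mul_comp, Polynomial.C_comp, Polynomial.pow_comp, Polynomial.X_comp]
    rw [sub_eq_zero.mp hfh, hhdef]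
  · have hdeglt : (f - h).degree < f.degree :=
      Polynomial.degree_sub_lt
        (by rw [Polynomial.degree_eq_natDegree hf0, Polynomial.degree_eq_natDegree hne0, hhdeg])
        hf0 hhlc.symm
    have hlt : (f - h).natDegree < n :=
      lt_of_lt_of_le (Polynomial.natDegree_lt_natDegree hfh hdeglt) hfn
    obtain ⟨ψ', hψ'L, hψ'⟩ := ihn _ hlt (f - h) le_rfl (hf.sub hL_h) hfz'
    refine ⟨ψ' + Polynomial.C c * X ^ e,
      hψ'L.add (by rw [he]; exact L_C_mul_X_pow c (j - d)), ?_⟩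
    rw [Polynomial.add_comp, ← hψ', Polynomial.mul_comp, Polynomial.C_comp,
      Polynomial.pow_comp, Polynomial.X_comp, ← hhdef]
    ring

end Div

section CoeffOne

lemma coeff_one_comp {K : Type*} [CommRing K] (p s : K[X]) (hs : s.coeff 0 = 0) :
    (p.comp s).coeff 1 = p.coeff 1 * s.coeff 1 := by
  classical
  rw [Polynomial.comp_eq_sum_left, Polynomial.sum_def, Polynomial.finset_sum_coeff]
  have hzero : ∀ e : ℕ, 1 ≤ e → (s ^ e).coeff 0 = 0 := by
    intro e he
    rw [Polynomial.coeff_zero_eq_eval_zero, Polynomial.eval_pow,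
      ← Polynomial.coeff_zero_eq_eval_zero, hs, zero_pow (by omega)]
  have h1 : ∀ e : ℕ, 2 ≤ e → (s ^ e).coeff 1 = 0 := by
    intro e he
    obtain ⟨e', rfl⟩ : ∃ e', e = e' + 2 := ⟨e - 2, by omega⟩
    rw [pow_succ, Polynomial.coeff_mul]
    rw [Finset.Nat.sum_antidiagonal_eq_sum_range_succ_mk, Finset.sum_range_succ,
      Finset.sum_range_one, hzero (e' + 1) (by omega), hs, zero_mul, mul_zero, add_zero]
  rw [Finset.sum_eq_single 1]
  · rw [Polynomial.coeff_C_mul, pow_one]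
  · intro e he hne
    rw [Polynomial.coeff_C_mul]
    rcases Nat.lt_or_ge e 2 with h2 | h2
    · interval_cases e
      · simp [Polynomial.coeff_one]
      · exact absurd rfl hne
    · rw [h1 e h2, mul_zero]
  · intro h1n
    rw [Polynomial.notMem_support_iff.mp h1n]
    simp

end CoeffOne

end KGSI

/-- Every finite Galois-stable `𝔽_q`-subspace `G` of the separable closure `Fs` which is
stable under `φ_T` is the kernel of a separable isogeny with domain `φ`: there are
`q`-linearized polynomials `u` (with coefficient of `X` equal to `1` and root set exactly `G`)
and `ψ_T` (with coefficient of `X` equal to `z`) such that `u ∘ φ_T = ψ_T ∘ u`. -/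
theorem kernel_gives_separable_isogeny
    (Fq : Type*) [Field Fq] [Fintype Fq] (q : ℕ) (hq : Fintype.card Fq = q)
    (F : Type*) [Field F] [Algebra Fq F]
    (Fs : Type*) [Field Fs] [Algebra F Fs] [IsSepClosure F Fs]
    [Algebra Fq Fs] [IsScalarTower Fq F Fs]
    (z : F) (r : ℕ) (hr : 1 ≤ r) (g : ℕ → F) (hgr : g r ≠ 0)
    (φT : Polynomial F)
    (hφT : φT = Polynomial.C z * Polynomial.X +
      ∑ i ∈ Finset.Icc 1 r, Polynomial.C (g i) * Polynomial.X ^ q ^ i)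
    (G : Submodule Fq Fs) (hGfin : (G : Set Fs).Finite)
    (hGal : ∀ σ : Fs ≃ₐ[F] Fs, ∀ x ∈ G, σ x ∈ G)
    (hGstab : ∀ x ∈ G, Polynomial.aeval x φT ∈ G) :
    ∃ u ψT : Polynomial F,
      (∀ m ∈ u.support, ∃ i : ℕ, m = q ^ i) ∧ u.coeff 1 = 1 ∧
      {x : Fs | Polynomial.aeval x u = 0} = (G : Set Fs) ∧
      (∀ m ∈ ψT.support, ∃ i : ℕ, m = q ^ i) ∧ ψT.coeff 1 = z ∧
      u.comp φT = ψT.comp u := by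
  classical
  have hq2 : 2 ≤ q := hq ▸ Fintype.one_lt_card
  -- characteristic setup
  haveI : CharP Fq (ringChar Fq) := ringChar.charP Fq
  obtain ⟨n, hp, hcardq⟩ := FiniteField.card Fq (ringChar Fq)
  haveI hpf : Fact (ringChar Fq).Prime := ⟨hp⟩
  have hk : q = ringChar Fq ^ (n : ℕ) := by rw [← hq, hcardq]
  haveI : CharP Fs (ringChar Fq) :=
    charP_of_injective_algebraMap (algebraMap Fq Fs).injective _
  haveI : CharP F (ringChar Fq) :=
    charP_of_injective_algebraMap (algebraMap Fq F).injective _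
  -- the product polynomial over Fs
  set T : Finset Fs := hGfin.toFinset with hT
  set W : Fs[X] := ∏ x ∈ T, (X - Polynomial.C x) with hW
  have hWlin : KGSI.L q W := KGSI.prod_G_lin hq hk G hGfin
  -- Galois invariance of the coefficients
  have hσW : ∀ σ : Fs ≃ₐ[F] Fs, ∀ m : ℕ, σ (W.coeff m) = W.coeff m := by
    intro σ m
    have himg : Finset.image (⇑σ) T = T := by
      apply Finset.eq_of_subset_of_card_le
      · intro y hy
        obtain ⟨x, hx, rfl⟩ := Finset.mem_image.mp hy
        exact hGfin.mem_toFinset.mpr (hGal σ x (hGfin.mem_toFinset.mp hx))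
      · rw [Finset.card_image_of_injective _ σ.injective]
    have hmapW : W.map σ.toAlgHom.toRingHom = W := by
      conv_lhs => rw [hW, ← Polynomial.coe_mapRingHom, map_prod]
      have hfac : ∀ x ∈ T, Polynomial.mapRingHom σ.toAlgHom.toRingHom (X - Polynomial.C x)
          = X - Polynomial.C (σ x) := by
        intro x _
        rw [Polynomial.coe_mapRingHom, Polynomial.map_sub, Polynomial.map_X, Polynomial.map_C]
        rfl
      rw [Finset.prod_congr rfl hfac,
        ← Finset.prod_image (f := fun y => X - Polynomial.C y)
          (fun a _ b _ hab => σ.injective hab), himg, hW]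
    have h1 : (W.map σ.toAlgHom.toRingHom).coeff m = σ (W.coeff m) :=
      Polynomial.coeff_map _ m
    rw [← h1, hmapW]
  have hWcoeff : ∀ m : ℕ, W.coeff m ∈ Set.range (algebraMap F Fs) := by
    intro m
    obtain ⟨y, hy⟩ := KGSI.fixed_mem_range (W.coeff m) (fun σ => hσW σ m)
    exact ⟨y, hy⟩
  obtain ⟨u0, hu0map⟩ := (Polynomial.mem_lifts _).mp
    ((Polynomial.lifts_iff_coeff_lifts W).mpr hWcoeff)
  have hu0lin : KGSI.L q u0 := by
    intro m hm
    apply hWlin m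
    rw [Polynomial.mem_support_iff] at hm ⊢
    rw [← hu0map, Polynomial.coeff_map]
    exact (map_ne_zero_iff _ (algebraMap F Fs).injective).mpr hm
  have haeval : ∀ x : Fs, Polynomial.aeval x u0 = W.eval x := by
    intro x
    rw [Polynomial.aeval_def, ← Polynomial.eval_map, hu0map]
  have hWroot : ∀ x : Fs, W.eval x = 0 ↔ x ∈ G := by
    intro x
    rw [hW, Polynomial.eval_prod, Finset.prod_eq_zero_iff]
    constructor
    · rintro ⟨g', hg', hz⟩
      simp only [Polynomial.eval_sub, Polynomial.eval_X, Polynomial.eval_C] at hz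
      exact (sub_eq_zero.mp hz) ▸ hGfin.mem_toFinset.mp hg'
    · intro hx
      exact ⟨x, hGfin.mem_toFinset.mpr hx, by simp⟩
  -- the linear coefficient of W is nonzero
  have h0T : (0 : Fs) ∈ T := hGfin.mem_toFinset.mpr G.zero_mem
  have hWsplit : W = X * ∏ x ∈ T.erase 0, (X - Polynomial.C x) := by
    rw [hW, ← Finset.mul_prod_erase T _ h0T]
    simp
  have hWc1 : W.coeff 1 ≠ 0 := by
    rw [hWsplit, Polynomial.coeff_X_mul, Polynomial.coeff_zero_eq_eval_zero,
      Polynomial.eval_prod]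
    apply Finset.prod_ne_zero_iff.mpr
    intro x hx
    simp only [Polynomial.eval_sub, Polynomial.eval_X, Polynomial.eval_C, zero_sub, ne_eq,
      neg_eq_zero]
    exact Finset.ne_of_mem_erase hx
  set c0 : F := u0.coeff 1 with hc0def
  have hc0alg : algebraMap F Fs c0 = W.coeff 1 := by
    rw [← hu0map, Polynomial.coeff_map]
  have hc0 : c0 ≠ 0 := fun h => hWc1 (by rw [← hc0alg, h, map_zero])
  set u : F[X] := Polynomial.C c0⁻¹ * u0 with hu
  have hulin : KGSI.L q u := hu0lin.C_mul _
  have huc1 : u.coeff 1 = 1 := by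
    rw [hu, Polynomial.coeff_C_mul, ← hc0def, inv_mul_cancel₀ hc0]
  have huroot : ∀ x : Fs, Polynomial.aeval x u = 0 ↔ x ∈ G := by
    intro x
    rw [hu, map_mul, Polynomial.aeval_C, haeval, mul_eq_zero, ← hWroot x]
    constructor
    · rintro (h | h)
      · exact absurd h ((map_ne_zero_iff _ (algebraMap F Fs).injective).mpr (inv_ne_zero hc0))
      · exact h
    · exact Or.inr
  -- degrees
  have hWdeg : W.natDegree = T.card := by
    rw [hW, Polynomial.natDegree_prod _ _ (fun a _ => Polynomial.X_sub_C_ne_zero _)]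
    rw [Finset.sum_congr rfl (fun a _ => Polynomial.natDegree_X_sub_C a)]
    simp
  have hu0deg : u0.natDegree = T.card := by
    rw [← hWdeg, ← hu0map,
      Polynomial.natDegree_map_eq_of_injective (algebraMap F Fs).injective]
  have hudeg : u.natDegree = T.card := by
    rw [hu, Polynomial.natDegree_C_mul (inv_ne_zero hc0), hu0deg]
  haveI : Fintype ↥(G : Set Fs) := hGfin.fintype
  haveI : Fintype ↥G := Fintype.ofEquiv ↥(G : Set Fs)
    (Equiv.subtypeEquivRight (fun x => Iff.rfl))
  have hN : T.card = q ^ Module.finrank Fq ↥G := by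
    rw [hT, Set.Finite.card_toFinset]
    rw [Fintype.card_congr
      ((Equiv.subtypeEquivRight (fun x : Fs => Iff.rfl)) : ↥(G : Set Fs) ≃ ↥G)]
    rw [Module.card_eq_pow_finrank (K := Fq), hq]
  -- φT is linearized
  have hφlin : KGSI.L q φT := by
    rw [hφT]
    apply KGSI.L.add
    · exact (KGSI.L_X (q := q) (K := F)).C_mul z
    · exact KGSI.L.sum _ _ (fun i _ => KGSI.L_C_mul_X_pow _ _)
  -- apply the division lemma
  obtain ⟨ψ, hψlin, hψcomp⟩ := KGSI.ore_div hq2 hk T hN u hulin (hudeg.trans hN)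
    (fun x hx => (huroot x).mpr (hGfin.mem_toFinset.mp hx))
    (u.comp φT) (hulin.comp hk hφlin)
    (fun x hx => by
      rw [Polynomial.aeval_comp]
      exact (huroot _).mpr (hGstab x (hGfin.mem_toFinset.mp hx)))
  -- linear coefficients
  have huc0 : u.coeff 0 = 0 := hulin.coeff_zero hq2
  have hφc0 : φT.coeff 0 = 0 := hφlin.coeff_zero hq2
  have hφc1 : φT.coeff 1 = z := by
    rw [hφT, Polynomial.coeff_add, Polynomial.coeff_C_mul, Polynomial.coeff_X_one, mul_one,
      Polynomial.finset_sum_coeff, Finset.sum_eq_zero, add_zero]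
    intro i hi
    have hi1 : 1 ≤ i := (Finset.mem_Icc.mp hi).1
    have : q ≤ q ^ i := Nat.le_self_pow (by omega) q
    rw [Polynomial.coeff_C_mul, Polynomial.coeff_X_pow, if_neg (by omega), mul_zero]
  have hψc1 : ψ.coeff 1 = z := by
    have hcg := congrArg (fun P : Polynomial F => P.coeff 1) hψcomp
    rw [KGSI.coeff_one_comp u φT hφc0, KGSI.coeff_one_comp ψ u huc0, huc1, hφc1, one_mul,
      mul_one] at hcg
    exact hcg.symm
  exact ⟨u, ψ, hulin, huc1, Set.ext (fun x => huroot x), hψlin, hψc1, hψcomp⟩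
end

section
/- Let q be a prime power, F a field which is an 𝔽_q-algebra, z ∈ F, and φ_T(X) = zX + g₁X^q + ⋯ + g_rX^{q^r} ∈ F[X] with g_r ≠ 0, r ≥ 1. Let u₁,…,uₙ ∈ F[X] be nonzero q-linearized polynomials, each defining an isogeny with domain φ: for each i there exists a q-linearized ψ_{i,T} ∈ F[X] whose coefficient of X equals z with uᵢ ∘ φ_T = ψ_{i,T} ∘ uᵢ. Let g ∈ F[X] be the monic greatest common divisor of u₁,…,uₙ in the Euclidean domain F[X] (this realizes the Ore right-gcd). Then g is q-linearized and there exists a q-linearized ψ'_T ∈ F[X] whose coefficient of X equals z such that g ∘ φ_T = ψ'_T ∘ g; i.e. the right-gcd of isogenies with domain φ is again an isogeny with domain φ. -/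
open Polynomial

namespace OreGcdAux
variable {F : Type*} [Field F] {q : ℕ}

/-- `q`-linearized: every exponent in the support is a power of `q`. -/
def QLin (q : ℕ) (f : Polynomial F) : Prop := ∀ m ∈ f.support, ∃ j : ℕ, m = q ^ j

lemma qlin_zero : QLin q (0 : F[X]) := by simp [QLin]

lemma qlin_X : QLin q (X : F[X]) := by
  intro m hm
  rw [mem_support_iff, coeff_X] at hm
  exact ⟨0, by rcases eq_or_ne m 1 with h | h <;> simp_all⟩

lemma qlin_add {f g : F[X]} (hf : QLin q f) (hg : QLin q g) : QLin q (f + g) := by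
  intro m hm
  rcases (Finset.mem_union.1 (Polynomial.support_add hm)) with h | h
  exacts [hf m h, hg m h]

lemma qlin_neg {f : F[X]} (hf : QLin q f) : QLin q (-f) := by
  intro m hm
  exact hf m (by simpa using hm)

lemma qlin_sub {f g : F[X]} (hf : QLin q f) (hg : QLin q g) : QLin q (f - g) := by
  rw [sub_eq_add_neg]; exact qlin_add hf (qlin_neg hg)

lemma qlin_C_mul {f : F[X]} (a : F) (hf : QLin q f) : QLin q (C a * f) := by
  intro m hm
  rw [mem_support_iff, coeff_C_mul] at hm
  exact hf m (mem_support_iff.2 fun h => hm (by rw [h, mul_zero]))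

lemma qlin_monomial (a : F) (j : ℕ) : QLin q (C a * X ^ q ^ j : F[X]) := by
  intro m hm
  refine ⟨j, ?_⟩
  rw [mem_support_iff, coeff_C_mul, coeff_X_pow] at hm
  by_contra h
  rw [if_neg h, mul_zero] at hm; exact hm rfl

lemma qlin_sum {ι : Type*} (s : Finset ι) (f : ι → F[X]) (h : ∀ i ∈ s, QLin q (f i)) :
    QLin q (∑ i ∈ s, f i) := by
  classical
  induction s using Finset.induction_on with
  | empty => simpa using (qlin_zero : QLin q (0 : F[X]))
  | insert _ _ hx ih =>
      rw [Finset.sum_insert hx]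
      exact qlin_add (h _ (Finset.mem_insert_self _ _))
        (ih fun i hi => h i (Finset.mem_insert_of_mem hi))

lemma qlin_coeff_zero (hq2 : 2 ≤ q) {f : F[X]} (hf : QLin q f) : f.coeff 0 = 0 := by
  by_contra h
  obtain ⟨j, hj⟩ := hf 0 (mem_support_iff.2 h)
  have := Nat.one_le_pow j q (by omega)
  omega

lemma sum_pow_frob (hq2 : 2 ≤ q)
    (hfrob : ∀ (x y : F[X]) (k : ℕ), (x + y) ^ q ^ k = x ^ q ^ k + y ^ q ^ k)
    {ι : Type*} (s : Finset ι) (v : ι → F[X]) (k : ℕ) :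
    (∑ i ∈ s, v i) ^ q ^ k = ∑ i ∈ s, v i ^ q ^ k := by
  classical
  have hqk : q ^ k ≠ 0 := by positivity
  induction s using Finset.induction_on with
  | empty => simp [zero_pow hqk]
  | insert _ _ hx ih => rw [Finset.sum_insert hx, Finset.sum_insert hx, hfrob, ih]

lemma qlin_pow (hq2 : 2 ≤ q)
    (hfrob : ∀ (x y : F[X]) (k : ℕ), (x + y) ^ q ^ k = x ^ q ^ k + y ^ q ^ k)
    {f : F[X]} (hf : QLin q f) (k : ℕ) : QLin q (f ^ q ^ k) := by
  have h1 : f = ∑ m ∈ f.support, C (f.coeff m) * X ^ m := by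
    conv_lhs => rw [f.as_sum_support]
    exact Finset.sum_congr rfl fun m _ => (C_mul_X_pow_eq_monomial).symm
  rw [h1, sum_pow_frob hq2 hfrob]
  apply qlin_sum
  intro m hm
  obtain ⟨j, rfl⟩ := hf m hm
  rw [mul_pow, ← C_pow, ← pow_mul, ← pow_add]
  exact qlin_monomial _ _

lemma qlin_comp (hq2 : 2 ≤ q)
    (hfrob : ∀ (x y : F[X]) (k : ℕ), (x + y) ^ q ^ k = x ^ q ^ k + y ^ q ^ k)
    {h f : F[X]} (hh : QLin q h) (hf : QLin q f) : QLin q (h.comp f) := by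
  rw [comp_eq_sum_left, sum_def]
  apply qlin_sum
  intro e he
  obtain ⟨j, rfl⟩ := hh e he
  exact qlin_C_mul _ (qlin_pow hq2 hfrob hf j)

lemma qlin_comp_add (hq2 : 2 ≤ q)
    (hfrob : ∀ (x y : F[X]) (k : ℕ), (x + y) ^ q ^ k = x ^ q ^ k + y ^ q ^ k)
    {h : F[X]} (hh : QLin q h) (f g : F[X]) :
    h.comp (f + g) = h.comp f + h.comp g := by
  rw [comp_eq_sum_left, comp_eq_sum_left, comp_eq_sum_left, sum_def, sum_def, sum_def,
    ← Finset.sum_add_distrib]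
  refine Finset.sum_congr rfl fun e he => ?_
  obtain ⟨j, rfl⟩ := hh e he
  rw [hfrob, mul_add]

lemma qlin_comp_zero (hq2 : 2 ≤ q) {h : F[X]} (hh : QLin q h) : h.comp 0 = 0 := by
  rw [comp_zero, ← coeff_zero_eq_eval_zero, qlin_coeff_zero hq2 hh, C_0]

lemma qlin_comp_sub (hq2 : 2 ≤ q)
    (hfrob : ∀ (x y : F[X]) (k : ℕ), (x + y) ^ q ^ k = x ^ q ^ k + y ^ q ^ k)
    {h : F[X]} (hh : QLin q h) (f g : F[X]) :
    h.comp (f - g) = h.comp f - h.comp g := by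
  have hneg : h.comp (-g) = -h.comp g := by
    have := qlin_comp_add hq2 hfrob hh g (-g)
    rw [add_neg_cancel, qlin_comp_zero hq2 hh] at this
    linear_combination -this
  rw [sub_eq_add_neg, qlin_comp_add hq2 hfrob hh, hneg, sub_eq_add_neg]

lemma dvd_qlin_comp (hq2 : 2 ≤ q) {h w d : F[X]} (hh : QLin q h) (hd : d ∣ w) :
    d ∣ h.comp w := by
  rw [comp_eq_sum_left, sum_def]
  refine Finset.dvd_sum fun e he => ?_
  obtain ⟨j, rfl⟩ := hh e he
  exact Dvd.dvd.mul_left (hd.trans (dvd_pow_self w (by positivity))) _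

lemma ore_division (hq2 : 2 ≤ q)
    (hfrob : ∀ (x y : F[X]) (k : ℕ), (x + y) ^ q ^ k = x ^ q ^ k + y ^ q ^ k) :
    ∀ (N : ℕ) (f g : F[X]), f.natDegree < N → QLin q f → QLin q g → g ≠ 0 →
    ∃ h rem : F[X], QLin q h ∧ QLin q rem ∧ f = h.comp g + rem ∧ rem.degree < g.degree := by
  intro N
  induction N with
  | zero => exact fun f g h => absurd h (Nat.not_lt_zero _)
  | succ N IH =>
    intro f g hN hf hg hg0
    by_cases hlt : f.degree < g.degree
    · exact ⟨0, f, qlin_zero, hf, by simp, hlt⟩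
    push_neg at hlt
    have hf0 : f ≠ 0 := by
      rintro rfl
      rw [degree_zero, le_bot_iff, degree_eq_bot] at hlt
      exact hg0 hlt
    obtain ⟨a, ha⟩ := hf _ (natDegree_mem_support_of_nonzero hf0)
    obtain ⟨b, hb⟩ := hg _ (natDegree_mem_support_of_nonzero hg0)
    have hba : b ≤ a := by
      have h1 : q ^ b ≤ q ^ a := by
        rw [← ha, ← hb]; exact natDegree_le_natDegree hlt
      exact (Nat.pow_le_pow_iff_right (by omega)).1 h1
    set k : ℕ := q ^ (a - b) with hk
    have hkb : k * q ^ b = q ^ a := by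
      rw [hk, ← pow_add]; congr 1; omega
    have hgl : g.leadingCoeff ≠ 0 := leadingCoeff_ne_zero.2 hg0
    set c : F := f.leadingCoeff / g.leadingCoeff ^ k with hc
    have hc0 : c ≠ 0 := by
      apply div_ne_zero (leadingCoeff_ne_zero.2 hf0) (pow_ne_zero _ hgl)
    set M : F[X] := C c * g ^ k with hM
    have hmcomp : (C c * X ^ k).comp g = M := by
      rw [mul_comp, C_comp, X_pow_comp]
    have hMdeg : M.natDegree = f.natDegree := by
      rw [hM, natDegree_C_mul hc0, natDegree_pow, hb, hkb, ← ha]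
    have hMlead : M.leadingCoeff = f.leadingCoeff := by
      rw [hM, leadingCoeff_mul, leadingCoeff_C, leadingCoeff_pow, hc,
        div_mul_cancel₀ _ (pow_ne_zero _ hgl)]
    have hM0 : M ≠ 0 := by
      intro h
      rw [h, leadingCoeff_zero] at hMlead
      exact leadingCoeff_ne_zero.2 hf0 hMlead.symm
    have hMdeg' : M.degree = f.degree := by
      rw [degree_eq_natDegree hM0, degree_eq_natDegree hf0, hMdeg]
    have hsub : (f - M).degree < f.degree :=
      degree_sub_lt hMdeg'.symm hf0 hMlead.symm
    have hglin : QLin q (g ^ k) := qlin_pow hq2 hfrob hg (a - b)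
    have hflin : QLin q (f - M) := qlin_sub hf (qlin_C_mul _ hglin)
    by_cases hF0 : f - M = 0
    · refine ⟨C c * X ^ k, 0, qlin_monomial c (a-b), qlin_zero, ?_, ?_⟩
      · rw [hmcomp, add_zero, ← sub_eq_zero, hF0]
      · rw [degree_zero]
        exact bot_lt_iff_ne_bot.2 (degree_eq_bot.not.2 hg0)
    · have hNd : (f - M).natDegree < N := by
        have := natDegree_lt_natDegree hF0 hsub
        omega
      obtain ⟨h', rem, hh', hrem, heq, hdeg⟩ := IH (f - M) g hNd hflin hg hg0
      refine ⟨C c * X ^ k + h', rem, qlin_add (qlin_monomial c (a-b)) hh', hrem, ?_, hdeg⟩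
      rw [add_comp, hmcomp]
      have : f = M + (f - M) := by ring
      rw [this, heq]; ring

lemma ore_gcd_pair (hq2 : 2 ≤ q)
    (hfrob : ∀ (x y : F[X]) (k : ℕ), (x + y) ^ q ^ k = x ^ q ^ k + y ^ q ^ k) :
    ∀ (N : ℕ) (f g : F[X]), g.natDegree < N → QLin q f → QLin q g →
    ∃ d a b : F[X], QLin q d ∧ QLin q a ∧ QLin q b ∧ d = a.comp f + b.comp g ∧
      (∃ hf : F[X], QLin q hf ∧ f = hf.comp d) ∧ (∃ hg : F[X], QLin q hg ∧ g = hg.comp d) := by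
  intro N
  induction N with
  | zero => exact fun f g h => absurd h (Nat.not_lt_zero _)
  | succ N IH =>
    intro f g hN hf hg
    by_cases hg0 : g = 0
    · subst hg0
      exact ⟨f, X, 0, hf, qlin_X, qlin_zero, by simp, ⟨X, qlin_X, by simp⟩, ⟨0, qlin_zero, by simp⟩⟩
    obtain ⟨hdiv, rem, hhdiv, hrem, heq, hdeg⟩ :=
      ore_division hq2 hfrob (f.natDegree + 1) f g (Nat.lt_succ_self _) hf hg hg0
    by_cases hrem0 : rem = 0
    · subst hrem0
      rw [add_zero] at heq
      exact ⟨g, 0, X, hg, qlin_zero, qlin_X, by simp, ⟨hdiv, hhdiv, heq⟩, ⟨X, qlin_X, by simp⟩⟩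
    have hNd : rem.natDegree < N := by
      have := natDegree_lt_natDegree hrem0 hdeg
      omega
    obtain ⟨d, a', b', hd, ha', hb', hbez, ⟨hg', hhg', hgeq⟩, ⟨hr, hhr, hreq⟩⟩ :=
      IH g rem hNd hg hrem
    refine ⟨d, b', a' - b'.comp hdiv, hd, hb', qlin_sub ha' (qlin_comp hq2 hfrob hb' hhdiv), ?_,
      ⟨hdiv.comp hg' + hr, qlin_add (qlin_comp hq2 hfrob hhdiv hhg') hhr, ?_⟩,
      ⟨hg', hhg', hgeq⟩⟩
    · have hremf : rem = f - hdiv.comp g := by rw [heq]; ring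
      rw [hbez, hremf, qlin_comp_sub hq2 hfrob hb', sub_comp, comp_assoc]
      ring
    · rw [add_comp, comp_assoc, ← hgeq, ← hreq, heq]

lemma ore_gcd_list (hq2 : 2 ≤ q)
    (hfrob : ∀ (x y : F[X]) (k : ℕ), (x + y) ^ q ^ k = x ^ q ^ k + y ^ q ^ k)
    (φT : F[X]) :
    ∀ l : List F[X], (∀ f ∈ l, QLin q f) →
      (∀ f ∈ l, ∃ ψ : F[X], QLin q ψ ∧ f.comp φT = ψ.comp f) →
    ∃ G : F[X], QLin q G ∧ (∀ f ∈ l, ∃ h : F[X], QLin q h ∧ f = h.comp G) ∧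
      (∀ d : F[X], (∀ f ∈ l, d ∣ f) → d ∣ G) ∧
      (∃ ψ : F[X], QLin q ψ ∧ G.comp φT = ψ.comp G) := by
  intro l
  induction l with
  | nil =>
    intro _ _
    exact ⟨0, qlin_zero, by simp, by simp, 0, qlin_zero, by simp⟩
  | cons f l IH =>
    intro hlin hiso
    obtain ⟨G', hG', hGdiv', hGmax', ψG, hψG, hψGeq⟩ :=
      IH (fun f hf => hlin f (List.mem_cons_of_mem _ hf))
        (fun f hf => hiso f (List.mem_cons_of_mem _ hf))
    obtain ⟨d, a, b, hd, ha, hb, hbez, ⟨hf, hhf, hfeq⟩, ⟨hg, hhg, hgeq⟩⟩ :=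
      ore_gcd_pair hq2 hfrob (G'.natDegree + 1) f G' (Nat.lt_succ_self _) 
        (hlin f (List.mem_cons_self)) hG'
    obtain ⟨ψf, hψf, hψfeq⟩ := hiso f (List.mem_cons_self)
    refine ⟨d, hd, ?_, ?_, ?_⟩
    · intro w hw
      rcases List.mem_cons.1 hw with rfl | hw
      · exact ⟨hf, hhf, hfeq⟩
      · obtain ⟨h, hh, hheq⟩ := hGdiv' w hw
        exact ⟨h.comp hg, qlin_comp hq2 hfrob hh hhg, by rw [comp_assoc, ← hgeq, hheq]⟩
    · intro e he
      have h1 : e ∣ f := he f (List.mem_cons_self)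
      have h2 : e ∣ G' := hGmax' e fun w hw => he w (List.mem_cons_of_mem _ hw)
      rw [hbez]
      exact dvd_add (dvd_qlin_comp hq2 ha h1) (dvd_qlin_comp hq2 hb h2)
    · refine ⟨(a.comp ψf).comp hf + (b.comp ψG).comp hg,
        qlin_add (qlin_comp hq2 hfrob (qlin_comp hq2 hfrob ha hψf) hhf)
          (qlin_comp hq2 hfrob (qlin_comp hq2 hfrob hb hψG) hhg), ?_⟩
      conv_lhs => rw [hbez]
      simp only [add_comp, comp_assoc]
      rw [hψfeq, hψGeq, ← hfeq, ← hgeq]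

lemma coeff_comp_low (hq2 : 2 ≤ q) {h w : F[X]} {N : ℕ} (hh : QLin q h) (hN : 1 ≤ N)
    (hw : ∀ m < N, w.coeff m = 0) : (h.comp w).coeff N = h.coeff 1 * w.coeff N := by
  rw [comp_eq_sum_left, sum_def, finset_sum_coeff]
  have h0 : ∀ e ∈ h.support, e ≠ 1 → (C (h.coeff e) * w ^ e).coeff N = 0 := by
    intro e he hne
    obtain ⟨j, rfl⟩ := hh e he
    have hj : j ≠ 0 := by rintro rfl; exact hne (pow_zero q)
    have he2 : 2 ≤ q ^ j := le_trans hq2 (Nat.le_self_pow hj q)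
    have hXw : X ^ N ∣ w := X_pow_dvd_iff.2 hw
    have hX2 : X ^ (N * q ^ j) ∣ w ^ q ^ j := by
      rw [pow_mul]
      exact pow_dvd_pow_of_dvd hXw _
    rw [coeff_C_mul, X_pow_dvd_iff.1 hX2 N (by nlinarith), mul_zero]
  have h1 : 1 ∉ h.support → (C (h.coeff 1) * w ^ 1).coeff N = 0 := by
    intro h1
    rw [notMem_support_iff.1 h1, C_0, zero_mul, coeff_zero]
  rw [Finset.sum_eq_single 1 h0 h1, coeff_C_mul, pow_one]

lemma coeff_comp_phi (hq2 : 2 ≤ q) {h φT w : F[X]} {z : F} (t : ℕ) (hh : QLin q h)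
    (hfac : φT = X * w) (hwz : w.coeff 0 = z)
    (hlow : ∀ m < q ^ t, h.coeff m = 0) :
    (h.comp φT).coeff (q ^ t) = h.coeff (q ^ t) * z ^ q ^ t := by
  rw [comp_eq_sum_left, sum_def, finset_sum_coeff]
  have h0 : ∀ e ∈ h.support, e ≠ q ^ t → (C (h.coeff e) * φT ^ e).coeff (q ^ t) = 0 := by
    intro e he hne
    have hge : q ^ t ≤ e := by
      by_contra hc
      push_neg at hc
      exact (mem_support_iff.1 he) (hlow e hc)
    have hgt : q ^ t < e := lt_of_le_of_ne hge (Ne.symm hne)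
    have hX : X ^ e ∣ φT ^ e :=
      pow_dvd_pow_of_dvd (hfac ▸ dvd_mul_right X w) _
    rw [coeff_C_mul, X_pow_dvd_iff.1 hX _ hgt, mul_zero]
  have h1 : q ^ t ∉ h.support → (C (h.coeff (q ^ t)) * φT ^ q ^ t).coeff (q ^ t) = 0 := by
    intro h1
    rw [notMem_support_iff.1 h1, C_0, zero_mul, coeff_zero]
  rw [Finset.sum_eq_single (q ^ t) h0 h1, coeff_C_mul]
  congr 1
  have hc := coeff_X_pow_mul (w ^ q ^ t) (q ^ t) 0
  rw [zero_add] at hc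
  rw [hfac, mul_pow, hc, coeff_zero_eq_eval_zero, eval_pow, ← coeff_zero_eq_eval_zero, hwz]

end OreGcdAux

open Polynomial OreGcdAux

/-- The right-gcd of isogenies with domain `φ` is again an isogeny with domain `φ`: if
`u₁,…,uₙ` are nonzero `q`-linearized polynomials each satisfying `uᵢ ∘ φ_T = ψ_{i,T} ∘ uᵢ`
for some `q`-linearized `ψ_{i,T}` with coefficient of `X` equal to `z`, then their monic
greatest common divisor `gd` in `F[X]` (which realizes the Ore right-gcd) is `q`-linearized
and satisfies `gd ∘ φ_T = ψ'_T ∘ gd` for some `q`-linearized `ψ'_T` with coefficient of `X`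
equal to `z`. -/
theorem rgcd_of_isogenies_is_isogeny
    (Fq : Type*) [Field Fq] [Fintype Fq] (q : ℕ) (hq : Fintype.card Fq = q)
    (F : Type*) [Field F] [Algebra Fq F]
    (z : F) (r : ℕ) (hr : 1 ≤ r) (g : ℕ → F) (hgr : g r ≠ 0)
    (φT : Polynomial F)
    (hφT : φT = Polynomial.C z * Polynomial.X +
      ∑ i ∈ Finset.Icc 1 r, Polynomial.C (g i) * Polynomial.X ^ q ^ i)
    (n : ℕ) (hn : 1 ≤ n) (u : Fin n → Polynomial F)
    (hu0 : ∀ i, u i ≠ 0)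
    (hulin : ∀ i, ∀ m ∈ (u i).support, ∃ j : ℕ, m = q ^ j)
    (hiso : ∀ i, ∃ ψT : Polynomial F, (∀ m ∈ ψT.support, ∃ j : ℕ, m = q ^ j) ∧
      ψT.coeff 1 = z ∧ (u i).comp φT = ψT.comp (u i))
    (gd : Polynomial F) (hgd_monic : gd.Monic) (hgd_dvd : ∀ i, gd ∣ u i)
    (hgd_max : ∀ d : Polynomial F, (∀ i, d ∣ u i) → d ∣ gd) :
    (∀ m ∈ gd.support, ∃ j : ℕ, m = q ^ j) ∧
    ∃ ψT' : Polynomial F, (∀ m ∈ ψT'.support, ∃ j : ℕ, m = q ^ j) ∧ ψT'.coeff 1 = z ∧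
      gd.comp φT = ψT'.comp gd := by
  classical
  -- basic numerics and characteristic
  have hq2 : 2 ≤ q := hq ▸ Fintype.one_lt_card
  set p := ringChar Fq with hpdef
  haveI : CharP Fq p := ringChar.charP Fq
  have hp : p.Prime := CharP.char_is_prime Fq p
  obtain ⟨nn, -, hcard⟩ := FiniteField.card Fq p
  have hqpn : q = p ^ (nn : ℕ) := by rw [← hq, hcard]
  haveI : CharP F p := charP_of_injective_algebraMap (algebraMap Fq F).injective p
  haveI : Fact p.Prime := ⟨hp⟩
  have hfrob : ∀ (x y : F[X]) (k : ℕ), (x + y) ^ q ^ k = x ^ q ^ k + y ^ q ^ k := by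
    intro x y k
    have hqk : q ^ k = p ^ ((nn : ℕ) * k) := by rw [hqpn, ← pow_mul]
    rw [hqk]
    exact add_pow_expChar_pow x y p _
  -- the Ore gcd of the family
  obtain ⟨G, hGlin, hGdiv, hGmax, ψG, hψGlin, hψGeq⟩ :=
    ore_gcd_list hq2 hfrob φT (List.ofFn u)
      (by
        intro f hf
        obtain ⟨i, rfl⟩ := Set.mem_range.1 (show f ∈ Set.range u from List.mem_ofFn.1 hf)
        exact hulin i)
      (by
        intro f hf
        obtain ⟨i, rfl⟩ := Set.mem_range.1 (show f ∈ Set.range u from List.mem_ofFn.1 hf)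
        obtain ⟨ψ, h1, _, h3⟩ := hiso i
        exact ⟨ψ, h1, h3⟩)
  have hGu : ∀ i, ∃ h : F[X], QLin q h ∧ u i = h.comp G := fun i =>
    hGdiv (u i) (List.mem_ofFn.2 ⟨i, rfl⟩)
  have hGdvdu : ∀ i, G ∣ u i := by
    intro i
    obtain ⟨h, hh, heq⟩ := hGu i
    rw [heq]
    exact dvd_qlin_comp hq2 hh dvd_rfl
  have hGgd : G ∣ gd := hgd_max G hGdvdu
  have hgdG : gd ∣ G := by
    apply hGmax
    intro f hf
    obtain ⟨i, rfl⟩ := Set.mem_range.1 (show f ∈ Set.range u from List.mem_ofFn.1 hf)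
    exact hgd_dvd i
  have hgd0 : gd ≠ 0 := hgd_monic.ne_zero
  -- G = C c * gd with c a nonzero scalar
  obtain ⟨v, hv⟩ := associated_of_dvd_dvd hgdG hGgd
  obtain ⟨c, hcu, hcv⟩ := Polynomial.isUnit_iff.1 v.isUnit
  have hc0 : c ≠ 0 := hcu.ne_zero
  have hGc : G = C c * gd := by rw [← hv, ← hcv, mul_comm]
  -- gd is q-linearized
  have hgdlin : QLin q gd := by
    intro m hm
    apply hGlin
    rw [mem_support_iff, hGc, coeff_C_mul]
    exact mul_ne_zero hc0 (mem_support_iff.1 hm)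
  refine ⟨hgdlin, ?_⟩
  -- the conjugated isogeny companion
  set ψ' : F[X] := (C c⁻¹ * ψG).comp (C c * X) with hψ'def
  have hψ'lin : QLin q ψ' := by
    rw [hψ'def, comp_eq_sum_left, sum_def]
    apply qlin_sum
    intro e he
    obtain ⟨j, rfl⟩ := qlin_C_mul (q := q) c⁻¹ hψGlin e he
    rw [mul_pow, ← C_pow, ← mul_assoc, ← C_mul]
    exact qlin_monomial _ _
  have hψ'eq : gd.comp φT = ψ'.comp gd := by
    have h1 : ψ'.comp gd = C c⁻¹ * ψG.comp (C c * gd) := by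
      simp only [hψ'def, comp_assoc, mul_comp, C_comp, X_comp]
    have h2 : G.comp φT = C c * gd.comp φT := by
      rw [hGc, mul_comp, C_comp]
    rw [h1, ← hGc, ← hψGeq, h2, ← mul_assoc, ← C_mul, inv_mul_cancel₀ hc0, C_1, one_mul]
  refine ⟨ψ', hψ'lin, ?_, hψ'eq⟩
  -- factorization φT = X * w with w.coeff 0 = z
  set w : F[X] := C z + ∑ i ∈ Finset.Icc 1 r, C (g i) * X ^ (q ^ i - 1) with hwdef
  have hfac : φT = X * w := by
    rw [hφT, hwdef, mul_add, Finset.mul_sum]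
    congr 1
    · ring
    · refine Finset.sum_congr rfl fun i hi => ?_
      have h1 : q ^ i - 1 + 1 = q ^ i :=
        Nat.succ_pred_eq_of_pos (Nat.one_le_pow i q (by omega))
      conv_lhs => rw [← h1, pow_succ]
      ring
  have hwz : w.coeff 0 = z := by
    have hs : (∑ i ∈ Finset.Icc 1 r, C (g i) * X ^ (q ^ i - 1)).coeff 0 = 0 := by
      rw [finset_sum_coeff]
      refine Finset.sum_eq_zero fun i hi => ?_
      have hi' := (Finset.mem_Icc.1 hi).1
      have h2 : 2 ≤ q ^ i := le_trans hq2 (Nat.le_self_pow (by omega) q)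
      rw [coeff_C_mul, coeff_X_pow, if_neg (by omega), mul_zero]
    rw [hwdef, coeff_add, coeff_C, if_pos rfl, hs, add_zero]
  -- trailing exponent of gd
  obtain ⟨t, ht⟩ := hgdlin _ (natTrailingDegree_mem_support_of_nonzero hgd0)
  have hct : gd.coeff (q ^ t) ≠ 0 := by
    rw [← ht]
    exact mem_support_iff.1 (natTrailingDegree_mem_support_of_nonzero hgd0)
  have hlow_gd : ∀ m < q ^ t, gd.coeff m = 0 := fun m hm =>
    coeff_eq_zero_of_lt_natTrailingDegree (by omega)
  have eq1 : (gd.comp φT).coeff (q ^ t) = gd.coeff (q ^ t) * z ^ q ^ t :=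
    coeff_comp_phi hq2 t hgdlin hfac hwz hlow_gd
  have eq2 : (ψ'.comp gd).coeff (q ^ t) = ψ'.coeff 1 * gd.coeff (q ^ t) :=
    coeff_comp_low hq2 hψ'lin (Nat.one_le_pow t q (by omega)) hlow_gd
  have hψ'c : ψ'.coeff 1 = z ^ q ^ t := by
    have h0 := eq1 ▸ eq2 ▸ congrArg (fun P : F[X] => P.coeff (q ^ t)) hψ'eq
    have h2 : ψ'.coeff 1 * gd.coeff (q ^ t) = z ^ q ^ t * gd.coeff (q ^ t) := by
      linear_combination -h0
    rcases mul_eq_mul_right_iff.1 h2 with h | h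
    · exact h
    · exact absurd h hct
  -- trailing exponents of the uᵢ
  have htu : ∀ i : Fin n, ∃ ti : ℕ, (u i).natTrailingDegree = q ^ ti := fun i =>
    hulin i _ (natTrailingDegree_mem_support_of_nonzero (hu0 i))
  choose tU htU using htu
  have hzi : ∀ i : Fin n, z ^ q ^ (tU i) = z := by
    intro i
    obtain ⟨ψi, hψil, hψi1, hψie⟩ := hiso i
    have hcui : (u i).coeff (q ^ (tU i)) ≠ 0 := by
      rw [← htU i]
      exact mem_support_iff.1 (natTrailingDegree_mem_support_of_nonzero (hu0 i))
    have hlow_u : ∀ m < q ^ (tU i), (u i).coeff m = 0 := fun m hm =>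
      coeff_eq_zero_of_lt_natTrailingDegree (by rw [htU i]; omega)
    have e1 : ((u i).comp φT).coeff (q ^ (tU i)) = (u i).coeff (q ^ (tU i)) * z ^ q ^ (tU i) :=
      coeff_comp_phi hq2 (tU i) (hulin i) hfac hwz hlow_u
    have e2 : (ψi.comp (u i)).coeff (q ^ (tU i)) = z * (u i).coeff (q ^ (tU i)) := by
      rw [coeff_comp_low hq2 hψil (Nat.one_le_pow (tU i) q (by omega)) hlow_u, hψi1]
    have h0 := e1 ▸ e2 ▸ congrArg (fun P : F[X] => P.coeff (q ^ (tU i))) hψie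
    have h2 : z ^ q ^ (tU i) * (u i).coeff (q ^ (tU i)) = z * (u i).coeff (q ^ (tU i)) := by
      linear_combination h0
    rcases mul_eq_mul_right_iff.1 h2 with h | h
    · exact h
    · exact absurd h hcui
  -- t is the minimum of the tU i, hence z ^ q ^ t = z
  obtain ⟨i0, -, hmin⟩ := Finset.exists_min_image Finset.univ tU ⟨⟨0, hn⟩, Finset.mem_univ _⟩
  have hle1 : t ≤ tU i0 := by
    have hdvd : X ^ (q ^ t) ∣ u i0 := (X_pow_dvd_iff.2 hlow_gd).trans (hgd_dvd i0)
    have h1 : q ^ t ≤ q ^ (tU i0) := by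
      by_contra hcon
      push_neg at hcon
      refine mem_support_iff.1 (natTrailingDegree_mem_support_of_nonzero (hu0 i0)) ?_
      rw [htU i0]
      exact X_pow_dvd_iff.1 hdvd _ hcon
    exact (Nat.pow_le_pow_iff_right (by omega)).1 h1
  have hle2 : tU i0 ≤ t := by
    have hdvd : X ^ (q ^ (tU i0)) ∣ gd := by
      apply hgd_max
      intro i
      refine X_pow_dvd_iff.2 fun d hd => coeff_eq_zero_of_lt_natTrailingDegree ?_
      have h1 : q ^ (tU i0) ≤ q ^ (tU i) :=
        Nat.pow_le_pow_right (by omega) (hmin i (Finset.mem_univ i))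
      rw [htU i]; omega
    have h2 : q ^ (tU i0) ≤ q ^ t := by
      by_contra hcon
      push_neg at hcon
      exact hct (X_pow_dvd_iff.1 hdvd _ hcon)
    exact (Nat.pow_le_pow_iff_right (by omega)).1 h2
  have : tU i0 = t := le_antisymm hle2 hle1
  rw [hψ'c, ← this, hzi i0]
end

section
/- Let q be a prime power, F a field which is an 𝔽_q-algebra, and z ∈ F algebraic over 𝔽_q with minimal polynomial of degree m (so the A-characteristic 𝔭 = ker(𝔽_q[T] → F, T ↦ z) is nonzero of degree m). Let φ_T, ψ_T ∈ F[X] be q-linearized polynomials of positive τ-degree whose coefficients of X both equal z, and let u ∈ F[X] be a nonzero q-linearized polynomial with u ∘ φ_T = ψ_T ∘ u. If the coefficient of X in u vanishes, then there exists u' ∈ F[X] with u = u' ∘ X^{q^m}, i.e. u factors through the relative Frobenius τ^{deg 𝔭}. Moreover, in all cases there exist an integer k ≥ 0 and a q-linearized v ∈ F[X] whose coefficient of X is nonzero such that u = v ∘ X^{q^{mk}}. -/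
open Polynomial

private lemma aux_ntd_pow {F : Type*} [Field F] (r : Polynomial F) (hr : r ≠ 0) (n : ℕ) :
    (r ^ n).natTrailingDegree = n * r.natTrailingDegree := by
  induction n with
  | zero => simp
  | succ n ih =>
    rw [pow_succ, Polynomial.natTrailingDegree_mul (pow_ne_zero n hr) hr, ih]
    ring

private lemma aux_tc_pow {F : Type*} [Field F] (r : Polynomial F) (n : ℕ) :
    (r ^ n).trailingCoeff = r.trailingCoeff ^ n := by
  induction n with
  | zero => simp [Polynomial.trailingCoeff]
  | succ n ih => rw [pow_succ, Polynomial.trailingCoeff_mul, ih, pow_succ]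

private lemma aux_coeff_comp {F : Type*} [Field F] (p r : Polynomial F)
    (hr : 0 < r.natTrailingDegree) :
    (p.comp r).coeff (p.natTrailingDegree * r.natTrailingDegree)
      = p.trailingCoeff * r.trailingCoeff ^ p.natTrailingDegree := by
  have hr0 : r ≠ 0 := by rintro rfl; simp at hr
  by_cases hp : p = 0
  · simp [hp]
  rw [Polynomial.comp_eq_sum_left, Polynomial.sum_def, Polynomial.finset_sum_coeff,
    Finset.sum_eq_single p.natTrailingDegree]
  · rw [Polynomial.coeff_C_mul]
    have h1 : (r ^ p.natTrailingDegree).natTrailingDegree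
        = p.natTrailingDegree * r.natTrailingDegree := aux_ntd_pow r hr0 _
    have h2 : (r ^ p.natTrailingDegree).coeff (p.natTrailingDegree * r.natTrailingDegree)
        = (r ^ p.natTrailingDegree).trailingCoeff := by
      rw [Polynomial.trailingCoeff, h1]
    rw [h2, aux_tc_pow, Polynomial.trailingCoeff]
    rfl
  · intro e he hne
    have h3 : p.natTrailingDegree < e :=
      lt_of_le_of_ne (Polynomial.natTrailingDegree_le_of_ne_zero
        (Polynomial.mem_support_iff.mp he)) (Ne.symm hne)
    have h4 : p.natTrailingDegree * r.natTrailingDegree < (r ^ e).natTrailingDegree := by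
      rw [aux_ntd_pow r hr0]
      exact Nat.mul_lt_mul_of_pos_right h3 hr
    rw [Polynomial.coeff_C_mul, Polynomial.coeff_eq_zero_of_lt_natTrailingDegree h4, mul_zero]
  · intro h
    exact absurd (Polynomial.natTrailingDegree_mem_support_of_nonzero hp) h

private lemma aux_nat_dvd {q m j : ℕ} (hq : 2 ≤ q) (hm : 0 < m) (h : q ^ m - 1 ∣ q ^ j - 1) :
    m ∣ j := by
  have hqr : ∀ n : ℕ, 1 ≤ q ^ n := fun n => Nat.one_le_pow _ _ (by omega)
  set s := j / m with hs
  set r := j % m with hrr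
  have hj : j = m * s + r := (Nat.div_add_mod j m).symm
  have h1 : q ^ m - 1 ∣ q ^ (m * s) - 1 := by
    simpa [pow_mul] using Nat.sub_dvd_pow_sub_pow (x := q ^ m) (y := 1) (n := s)
  have h2 : q ^ m - 1 ∣ (q ^ (m * s) - 1) * q ^ r := h1.mul_right _
  have key : q ^ j - 1 - (q ^ (m * s) - 1) * q ^ r = q ^ r - 1 := by
    have e1 : q ^ j = q ^ (m * s) * q ^ r := by rw [hj, pow_add]
    have e2 : q ^ r ≤ q ^ (m * s) * q ^ r := Nat.le_mul_of_pos_left _ (hqr _)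
    have e3 := hqr r
    rw [Nat.sub_mul, one_mul, e1]
    omega
  have h3 : q ^ m - 1 ∣ q ^ r - 1 := key ▸ Nat.dvd_sub h h2
  have hrm : r < m := Nat.mod_lt _ hm
  have h4 : q ^ r - 1 < q ^ m - 1 := by
    have := Nat.pow_lt_pow_right (by omega : 1 < q) hrm
    have := hqr r
    omega
  have h0 : r = 0 := by
    by_contra hr0
    have h5 : q ≤ q ^ r := Nat.le_self_pow hr0 q
    have h6 : 0 < q ^ r - 1 := by omega
    exact absurd (Nat.le_of_dvd h6 h3) (by omega)
  exact ⟨s, by omega⟩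

private lemma aux_frob_dvd (Fq : Type*) [Field Fq] [Fintype Fq] (F : Type*) [Field F]
    [Algebra Fq F] (z : F) (hz : IsIntegral Fq z) (j : ℕ)
    (hfix : z ^ (Fintype.card Fq) ^ j = z) :
    (minpoly Fq z).natDegree ∣ j := by
  classical
  set q := Fintype.card Fq with hq
  set m := (minpoly Fq z).natDegree with hm
  have hq2 : 2 ≤ q := Fintype.one_lt_card
  have hm0 : 0 < m := minpoly.natDegree_pos hz
  set p := ringChar Fq with hp
  haveI : CharP Fq p := ringChar.charP Fq
  obtain ⟨e, hpe, hcard⟩ := FiniteField.card Fq p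
  haveI hfact : Fact p.Prime := ⟨hpe⟩
  haveI : CharP F p := charP_of_injective_algebraMap (algebraMap Fq F).injective p
  let f0 : F →+* F := iterateFrobenius F p (e * j)
  have hf0 : ∀ x : F, f0 x = x ^ q ^ j := by
    intro x
    rw [show f0 x = x ^ p ^ ((e : ℕ) * j) from iterateFrobenius_def _ _ _, pow_mul, ← hcard, ← hq]
  let f : F →ₐ[Fq] F :=
    { f0 with
      commutes' := fun c => by
        show f0 _ = _
        rw [hf0, ← map_pow, FiniteField.pow_card_pow] }
  have hS : ∀ x ∈ Algebra.adjoin Fq {z}, x ^ q ^ j = x := by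
    intro x hx
    have hle : Algebra.adjoin Fq {z} ≤ AlgHom.equalizer f (AlgHom.id Fq F) := by
      apply Algebra.adjoin_le
      intro y hy
      rw [Set.mem_singleton_iff] at hy
      rw [SetLike.mem_coe, AlgHom.mem_equalizer, hy]
      show f0 z = z
      rw [hf0]; exact hfix
    have := hle hx
    rw [AlgHom.mem_equalizer] at this
    have hfx : f0 x = x := this
    rwa [hf0] at hfx
  let K := IntermediateField.adjoin Fq {z}
  haveI : FiniteDimensional Fq K := IntermediateField.adjoin.finiteDimensional hz
  haveI : Finite K := Module.finite_of_finite Fq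
  haveI : Fintype K := Fintype.ofFinite K
  have hcardK : Fintype.card K = q ^ m := by
    rw [Module.card_eq_pow_finrank (K := Fq) (V := K), IntermediateField.adjoin.finrank hz, ← hq, ← hm]
  have hfixK : ∀ x : K, x ^ q ^ j = x := by
    intro x
    have hxmem : (x : F) ∈ Algebra.adjoin Fq {z} := by
      have h2 := x.2
      rw [← IntermediateField.adjoin_simple_toSubalgebra_of_isAlgebraic hz.isAlgebraic]
      exact h2
    have := hS _ hxmem
    exact Subtype.ext (by push_cast; exact this)
  obtain ⟨g, hg⟩ := IsCyclic.exists_generator (α := Kˣ)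
  have hgfix : g ^ q ^ j = g := by
    ext
    rw [Units.val_pow_eq_pow_val]
    exact congrArg Subtype.val (hfixK g.val)
  have hq1 : 1 ≤ q ^ j := Nat.one_le_pow _ _ (by omega)
  have h1 : g ^ (q ^ j - 1) = 1 := by
    have h : g ^ (q ^ j - 1) * g = 1 * g := by
      rw [← pow_succ, Nat.sub_add_cancel hq1, one_mul]; exact hgfix
    exact mul_right_cancel h
  have horder : orderOf g = q ^ m - 1 := by
    rw [orderOf_eq_card_of_forall_mem_zpowers hg, Nat.card_units, Nat.card_eq_fintype_card,
      hcardK]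
  have hdvd : q ^ m - 1 ∣ q ^ j - 1 := horder ▸ orderOf_dvd_of_pow_eq_one h1
  exact aux_nat_dvd hq2 hm0 hdvd

private lemma aux_ntd_one {F : Type*} [Field F] {q : ℕ} (hq2 : 2 ≤ q) (w : Polynomial F)
    (hlin : ∀ mm ∈ w.support, ∃ i : ℕ, mm = q ^ i) (h1 : w.coeff 1 ≠ 0) :
    w.natTrailingDegree = 1 ∧ w.trailingCoeff = w.coeff 1 := by
  have hle := Polynomial.natTrailingDegree_le_of_ne_zero h1
  have hne : w ≠ 0 := fun h => h1 (by simp [h])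
  have hmem := Polynomial.natTrailingDegree_mem_support_of_nonzero hne
  obtain ⟨i, hi⟩ := hlin _ hmem
  have hge : 1 ≤ w.natTrailingDegree := by
    rw [hi]; exact Nat.one_le_pow _ _ (by omega)
  have hntd : w.natTrailingDegree = 1 := le_antisymm hle hge
  exact ⟨hntd, by rw [Polynomial.trailingCoeff, hntd]⟩


/-- Over an `A`-field of nonzero `A`-characteristic `𝔭` of degree `m` (i.e. `z` is algebraic
over `𝔽_q` with minimal polynomial of degree `m`), any nonseparable isogeny `u : φ → ψ`
factors through the relative Frobenius `τ^{deg 𝔭}`, i.e. `u = u' ∘ X^{q^m}`; and any isogeny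
can be written `u = v ∘ X^{q^{mk}}` with `v` separable. -/
theorem inseparable_isogeny_factors_through_frobenius
    (Fq : Type*) [Field Fq] [Fintype Fq] (q : ℕ) (hq : Fintype.card Fq = q)
    (F : Type*) [Field F] [Algebra Fq F]
    (z : F) (hz : IsIntegral Fq z) (m : ℕ) (hm : m = (minpoly Fq z).natDegree)
    (φT ψT : Polynomial F)
    (hφlin : ∀ mm ∈ φT.support, ∃ i : ℕ, mm = q ^ i) (hφ1 : φT.coeff 1 = z)
    (hφpos : ∃ i : ℕ, 1 ≤ i ∧ φT.coeff (q ^ i) ≠ 0)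
    (hψlin : ∀ mm ∈ ψT.support, ∃ i : ℕ, mm = q ^ i) (hψ1 : ψT.coeff 1 = z)
    (hψpos : ∃ i : ℕ, 1 ≤ i ∧ ψT.coeff (q ^ i) ≠ 0)
    (u : Polynomial F) (hu : u ≠ 0)
    (hulin : ∀ mm ∈ u.support, ∃ i : ℕ, mm = q ^ i)
    (hcomm : u.comp φT = ψT.comp u) :
    (u.coeff 1 = 0 → ∃ u' : Polynomial F, u = u'.comp (Polynomial.X ^ q ^ m)) ∧
    (∃ k : ℕ, ∃ v : Polynomial F, (∀ mm ∈ v.support, ∃ i : ℕ, mm = q ^ i) ∧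
      v.coeff 1 ≠ 0 ∧ u = v.comp (Polynomial.X ^ q ^ (m * k))) := by
  classical
  have hq2 : 2 ≤ q := hq ▸ Fintype.one_lt_card
  have hm0 : 0 < m := hm ▸ minpoly.natDegree_pos hz
  set t := u.natTrailingDegree with ht
  have htmem : t ∈ u.support := Polynomial.natTrailingDegree_mem_support_of_nonzero hu
  obtain ⟨j, hj⟩ := hulin t htmem
  have huc : u.coeff t ≠ 0 := Polynomial.mem_support_iff.mp htmem
  have htc : u.trailingCoeff = u.coeff t := rfl
  have htpos : 0 < t := by rw [hj]; positivity
  -- the fixed-point equation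
  have hfix : z ^ q ^ j = z := by
    by_cases hz0 : z = 0
    · rw [hz0]; exact zero_pow (by positivity)
    · obtain ⟨hφntd, hφtc⟩ := aux_ntd_one hq2 φT hφlin (by rw [hφ1]; exact hz0)
      obtain ⟨hψntd, hψtc⟩ := aux_ntd_one hq2 ψT hψlin (by rw [hψ1]; exact hz0)
      have e1 := aux_coeff_comp u φT (by rw [hφntd]; norm_num)
      have e2 := aux_coeff_comp ψT u htpos
      rw [hφntd, mul_one, hφtc, hφ1, htc] at e1
      rw [hψntd, one_mul, pow_one, hψtc, hψ1, htc] at e2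
      rw [← ht] at e1 e2
      have e3 : u.coeff t * z ^ t = z * u.coeff t := by rw [← e1, ← e2, hcomm]
      have e4 : z ^ t = z := by
        have := mul_left_cancel₀ huc (e3.trans (mul_comm z (u.coeff t)))
        exact this
      rwa [hj] at e4
  have hdvd : m ∣ j := by
    rw [hm]
    exact aux_frob_dvd Fq F z hz j (by rw [hq]; exact hfix)
  obtain ⟨k, hk⟩ := hdvd
  -- support structure
  have key : ∀ i ∈ u.support, ∃ s : ℕ, i = t * q ^ s := by
    intro i hi
    obtain ⟨s, hs⟩ := hulin i hi
    have hle : t ≤ i := Polynomial.natTrailingDegree_le_of_ne_zero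
      (Polynomial.mem_support_iff.mp hi)
    have hjs : j ≤ s := by
      rw [hs, hj] at hle
      exact (Nat.pow_le_pow_iff_right (by omega)).mp hle
    exact ⟨s - j, by rw [hs, hj, ← pow_add, Nat.add_sub_cancel' hjs]⟩
  set v : Polynomial F := ∑ i ∈ u.support, Polynomial.C (u.coeff i) * Polynomial.X ^ (i / t)
    with hv
  have hvcoeff : ∀ n, v.coeff n = ∑ i ∈ u.support, if n = i / t then u.coeff i else 0 := by
    intro n
    rw [hv, Polynomial.finset_sum_coeff]
    refine Finset.sum_congr rfl fun i _ => ?_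
    rw [Polynomial.coeff_C_mul, Polynomial.coeff_X_pow, mul_ite, mul_one, mul_zero]
  have hvt : v.coeff 1 = u.coeff t := by
    rw [hvcoeff, Finset.sum_eq_single t]
    · rw [if_pos (Nat.div_self htpos).symm]
    · intro i hi hne
      obtain ⟨s, hs⟩ := key i hi
      have hdiv : i / t = q ^ s := by rw [hs, Nat.mul_div_cancel_left _ htpos]
      rw [if_neg]
      rw [hdiv]
      intro h1
      have hs0 : s = 0 := by
        by_contra hs0
        have : q ≤ q ^ s := Nat.le_self_pow hs0 q
        omega
      exact hne (by rw [hs, hs0, pow_zero, mul_one])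
    · intro h; exact absurd htmem h
  have hv1 : v.coeff 1 ≠ 0 := by rw [hvt]; exact huc
  have hvlin : ∀ mm ∈ v.support, ∃ i : ℕ, mm = q ^ i := by
    intro n hn
    rw [Polynomial.mem_support_iff, hvcoeff] at hn
    by_contra hcon
    push_neg at hcon
    apply hn
    apply Finset.sum_eq_zero
    intro i hi
    obtain ⟨s, hs⟩ := key i hi
    rw [if_neg]
    intro he
    exact hcon s (by rw [he, hs, Nat.mul_div_cancel_left _ htpos])
  have hvu : u = v.comp (Polynomial.X ^ t) := by
    rw [hv, Polynomial.sum_comp]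
    conv_lhs => rw [u.as_sum_support]
    refine Finset.sum_congr rfl fun i hi => ?_
    obtain ⟨s, hs⟩ := key i hi
    have hdiv : i / t = q ^ s := by rw [hs, Nat.mul_div_cancel_left _ htpos]
    rw [Polynomial.mul_comp, Polynomial.C_comp, Polynomial.X_pow_comp, ← pow_mul,
      hdiv, ← hs, Polynomial.C_mul_X_pow_eq_monomial]
  have hmain : u = v.comp (Polynomial.X ^ q ^ (m * k)) := by
    rw [← hk, ← hj]
    exact hvu
  constructor
  · intro h1
    have hk0 : k ≠ 0 := by
      rintro rfl
      rw [mul_zero, pow_zero, pow_one, Polynomial.comp_X] at hmain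
      exact hv1 (by rw [← hmain]; exact h1)
    refine ⟨v.comp (Polynomial.X ^ q ^ (m * (k - 1))), ?_⟩
    rw [hmain, Polynomial.comp_assoc]
    congr 1
    rw [Polynomial.X_pow_comp, ← pow_mul, ← pow_add]
    obtain ⟨k', rfl⟩ : ∃ k', k = k' + 1 := ⟨k - 1, by omega⟩
    congr 2
    simp only [Nat.add_sub_cancel, Nat.mul_succ]
    omega
  · exact ⟨k, v, hvlin, hv1, hmain⟩
end

section
/- Let q be a prime power, F a field which is an 𝔽_q-algebra, z ∈ F, r ≥ 1, and let φ_T(X) = zX + g₁X^q + ⋯ + g_rX^{q^r} and ψ_T(X) = zX + h₁X^q + ⋯ + h_rX^{q^r} be q-linearized polynomials in F[X] with g_r ≠ 0 and h_r ≠ 0. Let u ∈ F[X] be a nonzero q-linearized polynomial with u ∘ φ_T = ψ_T ∘ u (an isogeny φ → ψ). Then there exist a nonzero polynomial a ∈ 𝔽_q[T] and a nonzero q-linearized v ∈ F[X] with v ∘ ψ_T = φ_T ∘ v (the dual isogeny ψ → φ) such that, writing ℓ_φ and ℓ_ψ for the 𝔽_q-linear endomorphisms of an algebraic closure F̄ of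 F given by x ↦ φ_T(x) and x ↦ ψ_T(x), one has v(u(x)) = (a(ℓ_φ))(x) and u(v(x)) = (a(ℓ_ψ))(x) for all x ∈ F̄, where a(ℓ) denotes the evaluation of the polynomial a at the endomorphism ℓ; i.e. v∘u = φ_a and u∘v = ψ_a. -/
open Polynomial

namespace DualIsogenyAux

variable {F : Type*} [Field F] {q p e : ℕ}

/-- `q`-linearized polynomial predicate. -/
def IsLinQ (q : ℕ) (f : F[X]) : Prop := ∀ m ∈ f.support, ∃ i : ℕ, m = q ^ i

lemma IsLinQ.coeff_eq_zero {f : F[X]} (hf : IsLinQ q f) {n : ℕ}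
    (hn : ∀ i : ℕ, n ≠ q ^ i) : f.coeff n = 0 := by
  by_contra h
  obtain ⟨i, hi⟩ := hf n (mem_support_iff.2 h)
  exact hn i hi

lemma IsLinQ.coeff_zero (hq2 : 2 ≤ q) {f : F[X]} (hf : IsLinQ q f) : f.coeff 0 = 0 :=
  hf.coeff_eq_zero fun i h => ((pow_pos (by omega : 0 < q) i).ne' h.symm)

lemma isLinQ_zero : IsLinQ q (0 : F[X]) := by intro m hm; simp at hm

lemma isLinQ_X : IsLinQ q (X : F[X]) := by
  intro m hm
  rw [mem_support_iff, coeff_X] at hm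
  exact ⟨0, by simp at hm ⊢; omega⟩

lemma IsLinQ.add {f g : F[X]} (hf : IsLinQ q f) (hg : IsLinQ q g) : IsLinQ q (f + g) := by
  intro m hm
  rw [mem_support_iff, coeff_add] at hm
  by_contra hno
  push_neg at hno
  rw [hf.coeff_eq_zero (fun i hi => hno i hi), hg.coeff_eq_zero (fun i hi => hno i hi),
    add_zero] at hm
  exact hm rfl

lemma IsLinQ.sub {f g : F[X]} (hf : IsLinQ q f) (hg : IsLinQ q g) : IsLinQ q (f - g) := by
  intro m hm
  rw [mem_support_iff, coeff_sub] at hm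
  by_contra hno
  push_neg at hno
  rw [hf.coeff_eq_zero (fun i hi => hno i hi), hg.coeff_eq_zero (fun i hi => hno i hi),
    sub_zero] at hm
  exact hm rfl

lemma IsLinQ.C_mul {f : F[X]} (hf : IsLinQ q f) (c : F) : IsLinQ q (C c * f) := by
  intro m hm
  rw [mem_support_iff, coeff_C_mul] at hm
  exact hf m (mem_support_iff.2 fun h => hm (by rw [h, mul_zero]))

lemma isLinQ_C_mul_X_pow (c : F) (j : ℕ) : IsLinQ q (C c * X ^ q ^ j) := by
  intro m hm
  rw [mem_support_iff, coeff_C_mul, coeff_X_pow] at hm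
  refine ⟨j, ?_⟩
  by_contra h
  rw [if_neg (fun hh => h hh), mul_zero] at hm
  exact hm rfl

lemma IsLinQ.map {f : F[X]} (hf : IsLinQ q f) (σ : F →+* F) : IsLinQ q (f.map σ) :=
  fun m hm => hf m (support_map_subset σ f hm)

section Char

variable [Fact p.Prime] [CharP F p]

lemma frob_pow_apply (n : ℕ) (x : F) : (frobenius F p ^ n) x = x ^ p ^ n := by
  have h1 : ⇑(frobenius F p ^ n) = (⇑(frobenius F p))^[n] := RingHom.coe_pow _ _
  rw [h1, ← coe_iterateFrobenius, iterateFrobenius_def]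

lemma pow_q_pow_eq (hq : q = p ^ e) (f : F[X]) (j : ℕ) :
    f ^ q ^ j = (expand F (q ^ j) f).map (frobenius F p ^ (e * j)) := by
  have h : q ^ j = p ^ (e * j) := by rw [hq, ← pow_mul]
  rw [h, ← map_iterateFrobenius_expand p f (e * j)]
  congr 1
  ext x
  rw [frob_pow_apply, iterateFrobenius_def]

lemma coeff_pow_q_pow (hq : q = p ^ e) (f : F[X]) (i n : ℕ) :
    (f ^ q ^ i).coeff n =
      if q ^ i ∣ n then (f.coeff (n / q ^ i)) ^ q ^ i else 0 := by
  have hqpos : 0 < q := by rw [hq]; exact pow_pos (Nat.Prime.pos Fact.out) e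
  rw [pow_q_pow_eq hq, coeff_map, coeff_expand (pow_pos hqpos i)]
  split_ifs with h
  · rw [frob_pow_apply, hq, ← pow_mul, mul_comm e i, pow_mul]
  · exact map_zero _

lemma IsLinQ.pow (hq2 : 2 ≤ q) (hq : q = p ^ e) {f : F[X]} (hf : IsLinQ q f) (i : ℕ) :
    IsLinQ q (f ^ q ^ i) := by
  intro m hm
  rw [mem_support_iff, coeff_pow_q_pow hq] at hm
  split_ifs at hm with hdvd
  · have h2 : f.coeff (m / q ^ i) ≠ 0 := fun h => hm (by rw [h, zero_pow]; positivity)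
    obtain ⟨j, hj⟩ := hf _ (mem_support_iff.2 h2)
    exact ⟨i + j, by rw [pow_add, ← hj, Nat.mul_div_cancel' hdvd]⟩
  · exact absurd rfl hm

lemma coeff_comp (f g : F[X]) (n : ℕ) :
    (f.comp g).coeff n = ∑ m ∈ f.support, f.coeff m * (g ^ m).coeff n := by
  rw [comp_eq_sum_left, sum_def, finset_sum_coeff]
  exact Finset.sum_congr rfl fun m _ => coeff_C_mul _

lemma IsLinQ.comp (hq2 : 2 ≤ q) (hq : q = p ^ e) {f g : F[X]}
    (hf : IsLinQ q f) (hg : IsLinQ q g) : IsLinQ q (f.comp g) := by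
  intro n hn
  rw [mem_support_iff, coeff_comp] at hn
  obtain ⟨m, hm, hne⟩ := Finset.exists_ne_zero_of_sum_ne_zero hn
  obtain ⟨i, rfl⟩ := hf m hm
  have : (g ^ q ^ i).coeff n ≠ 0 := fun h => hne (by rw [h, mul_zero])
  exact (hg.pow hq2 hq i) n (mem_support_iff.2 this)

lemma IsLinQ.comp_add (hq : q = p ^ e) {f : F[X]} (hf : IsLinQ q f) (P Q : F[X]) :
    f.comp (P + Q) = f.comp P + f.comp Q := by
  rw [comp_eq_sum_left, comp_eq_sum_left, comp_eq_sum_left, sum_def, sum_def, sum_def,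
    ← Finset.sum_add_distrib]
  refine Finset.sum_congr rfl fun m hm => ?_
  obtain ⟨i, rfl⟩ := hf m hm
  rw [hq, ← pow_mul, add_pow_char_pow, mul_add]

lemma pow_fixed {c : F} (hc : c ^ q = c) (i : ℕ) : c ^ q ^ i = c := by
  induction i with
  | zero => rw [pow_zero, pow_one]
  | succ i ih => rw [pow_succ, pow_mul, ih, hc]

lemma IsLinQ.comp_C_mul {f : F[X]} (hf : IsLinQ q f) {c : F} (hc : c ^ q = c) (P : F[X]) :
    f.comp (C c * P) = C c * f.comp P := by
  rw [comp_eq_sum_left, comp_eq_sum_left, sum_def, sum_def, Finset.mul_sum]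
  refine Finset.sum_congr rfl fun m hm => ?_
  obtain ⟨i, rfl⟩ := hf m hm
  rw [mul_pow, ← C_pow, pow_fixed hc, mul_left_comm]

lemma coeff_comp_qpow_outer (hq2 : 2 ≤ q) (hq : q = p ^ e) {k : ℕ} {f : F[X]} (g : F[X])
    (hf : IsLinQ q f) (hfl : ∀ i < k, f.coeff (q ^ i) = 0) :
    (f.comp g).coeff (q ^ k) = f.coeff (q ^ k) * (g.coeff 1) ^ q ^ k := by
  rw [coeff_comp, Finset.sum_eq_single (q ^ k)]
  · rw [coeff_pow_q_pow hq, if_pos dvd_rfl, Nat.div_self (pow_pos (by omega) k)]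
  · intro m hm hne
    obtain ⟨i, rfl⟩ := hf m hm
    rcases lt_trichotomy i k with hik | hik | hik
    · rw [hfl i hik, zero_mul]
    · exact absurd (by rw [hik]) hne
    · rw [coeff_pow_q_pow hq, if_neg, mul_zero]
      rw [Nat.pow_dvd_pow_iff_le_right (by omega)]
      omega
  · intro h
    rw [notMem_support_iff.1 h, zero_mul]

lemma coeff_comp_qpow_inner (hq2 : 2 ≤ q) (hq : q = p ^ e) {k : ℕ} {f g : F[X]}
    (hf : IsLinQ q f) (hgl : ∀ i < k, g.coeff (q ^ i) = 0) :
    (f.comp g).coeff (q ^ k) = f.coeff 1 * g.coeff (q ^ k) := by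
  rw [coeff_comp, Finset.sum_eq_single 1]
  · rw [pow_one]
  · intro m hm hne
    obtain ⟨i, rfl⟩ := hf m hm
    have hi : 1 ≤ i := by
      rcases Nat.eq_zero_or_pos i with h0 | h1
      · exact absurd (by rw [h0, pow_zero]) hne
      · exact h1
    rw [coeff_pow_q_pow hq]
    split_ifs with hdvd
    · have hik : i ≤ k := (Nat.pow_dvd_pow_iff_le_right (by omega : 1 < q)).1 hdvd
      rw [Nat.pow_div hik (by omega), hgl (k - i) (by omega), zero_pow, mul_zero]
      positivity
    · rw [mul_zero]
  · intro h
    rw [notMem_support_iff.1 h, zero_mul]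

end Char

section PhiA

variable {Fq : Type*} [Field Fq]

/-- Iterated composition `Φ^{∘ n}`. -/
noncomputable def Dit (Φ : F[X]) : ℕ → F[X]
  | 0 => X
  | n + 1 => Φ.comp (Dit Φ n)

/-- `φ_a` for `a ∈ Fq[T]`. -/
lemma Dit_zero (Φ : F[X]) : Dit Φ 0 = X := rfl

lemma Dit_succ (Φ : F[X]) (n : ℕ) : Dit Φ (n + 1) = Φ.comp (Dit Φ n) := rfl

noncomputable def phiA (alg : Fq →+* F) (Φ : F[X]) (a : Fq[X]) : F[X] :=
  a.sum fun i c => C (alg c) * Dit Φ i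

lemma phiA_add (alg : Fq →+* F) (Φ : F[X]) (a b : Fq[X]) :
    phiA alg Φ (a + b) = phiA alg Φ a + phiA alg Φ b := by
  unfold phiA
  rw [sum_add_index]
  · intro i; rw [map_zero, C_0, zero_mul]
  · intro i c d; rw [map_add, C_add, add_mul]

lemma phiA_zero (alg : Fq →+* F) (Φ : F[X]) : phiA alg Φ 0 = 0 := by
  unfold phiA; rw [sum_zero_index]

lemma phiA_sub (alg : Fq →+* F) (Φ : F[X]) (a b : Fq[X]) :
    phiA alg Φ (a - b) = phiA alg Φ a - phiA alg Φ b := by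
  have h := phiA_add alg Φ (a - b) b
  rw [sub_add_cancel] at h
  rw [h]; ring

lemma phiA_monomial (alg : Fq →+* F) (Φ : F[X]) (n : ℕ) (c : Fq) :
    phiA alg Φ (monomial n c) = C (alg c) * Dit Φ n := by
  unfold phiA
  rw [sum_monomial_index]
  rw [map_zero, C_0, zero_mul]

lemma phiA_one (alg : Fq →+* F) (Φ : F[X]) : phiA alg Φ 1 = X := by
  have : (1 : Fq[X]) = monomial 0 1 := by simp
  rw [this, phiA_monomial, map_one, C_1, one_mul]; rfl

lemma isLinQ_Dit (hq2 : 2 ≤ q) (hq : q = p ^ e) [Fact p.Prime] [CharP F p]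
    {Φ : F[X]} (hΦ : IsLinQ q Φ) (n : ℕ) : IsLinQ q (Dit Φ n) := by
  induction n with
  | zero => exact isLinQ_X
  | succ n ih => exact hΦ.comp hq2 hq ih

lemma isLinQ_phiA (hq2 : 2 ≤ q) (hq : q = p ^ e) [Fact p.Prime] [CharP F p]
    (alg : Fq →+* F) {Φ : F[X]} (hΦ : IsLinQ q Φ) (a : Fq[X]) :
    IsLinQ q (phiA alg Φ a) := by
  intro n hn
  rw [mem_support_iff] at hn
  unfold phiA at hn
  rw [sum_def, finset_sum_coeff] at hn
  obtain ⟨m, hm, hne⟩ := Finset.exists_ne_zero_of_sum_ne_zero hn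
  rw [coeff_C_mul] at hne
  have : (Dit Φ m).coeff n ≠ 0 := fun h => hne (by rw [h, mul_zero])
  exact isLinQ_Dit hq2 hq hΦ m n (mem_support_iff.2 this)

lemma phiA_C_mul (alg : Fq →+* F) (Φ : F[X]) (c : Fq) (b : Fq[X]) :
    phiA alg Φ (C c * b) = C (alg c) * phiA alg Φ b := by
  induction b using Polynomial.induction_on' with
  | add P Q hP hQ => rw [mul_add, phiA_add, phiA_add, hP, hQ, mul_add]
  | monomial n d =>
    rw [C_mul_monomial, phiA_monomial, phiA_monomial, map_mul, C_mul, mul_assoc]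

lemma phiA_X_mul (hq2 : 2 ≤ q) (hq : q = p ^ e) [Fact p.Prime] [CharP F p]
    (alg : Fq →+* F) {Φ : F[X]} (hΦ : IsLinQ q Φ)
    (halg : ∀ c : Fq, (alg c) ^ q = alg c) (b : Fq[X]) :
    phiA alg Φ (X * b) = Φ.comp (phiA alg Φ b) := by
  induction b using Polynomial.induction_on' with
  | add P Q hP hQ => rw [mul_add, phiA_add, hP, hQ, phiA_add, hΦ.comp_add hq]
  | monomial n d =>
    rw [phiA_monomial, hΦ.comp_C_mul (halg d)]
    have : (X : Fq[X]) * monomial n d = monomial (n + 1) d := by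
      rw [X_mul, monomial_mul_X]
    rw [this, phiA_monomial]
    rfl

lemma phiA_X_pow_mul (hq2 : 2 ≤ q) (hq : q = p ^ e) [Fact p.Prime] [CharP F p]
    (alg : Fq →+* F) {Φ : F[X]} (hΦ : IsLinQ q Φ)
    (halg : ∀ c : Fq, (alg c) ^ q = alg c) (n : ℕ) (b : Fq[X]) :
    phiA alg Φ (X ^ n * b) = (Dit Φ n).comp (phiA alg Φ b) := by
  induction n with
  | zero => rw [pow_zero, one_mul]; exact (X_comp).symm
  | succ n ih =>
    have h1 : (X : Fq[X]) ^ (n + 1) * b = X * (X ^ n * b) := by ring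
    rw [h1, phiA_X_mul hq2 hq alg hΦ halg, ih]
    show _ = (Φ.comp (Dit Φ n)).comp _
    rw [comp_assoc]

lemma phiA_mul (hq2 : 2 ≤ q) (hq : q = p ^ e) [Fact p.Prime] [CharP F p]
    (alg : Fq →+* F) {Φ : F[X]} (hΦ : IsLinQ q Φ)
    (halg : ∀ c : Fq, (alg c) ^ q = alg c) (a b : Fq[X]) :
    phiA alg Φ (a * b) = (phiA alg Φ a).comp (phiA alg Φ b) := by
  induction a using Polynomial.induction_on' with
  | add P Q hP hQ => rw [add_mul, phiA_add, hP, hQ, phiA_add, add_comp]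
  | monomial n c =>
    rw [← C_mul_X_pow_eq_monomial, mul_assoc, phiA_C_mul,
      phiA_X_pow_mul hq2 hq alg hΦ halg, phiA_C_mul, mul_comp, C_comp]
    congr 1
    have h2 : (X : Fq[X]) ^ n = X ^ n * 1 := (mul_one _).symm
    rw [h2, phiA_X_pow_mul hq2 hq alg hΦ halg, phiA_one, comp_X]

lemma Dit_intertwine {u Φ Ψ : F[X]} (hcomm : u.comp Φ = Ψ.comp u) (n : ℕ) :
    u.comp (Dit Φ n) = (Dit Ψ n).comp u := by
  induction n with
  | zero => rw [Dit, Dit, comp_X, X_comp]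
  | succ n ih =>
    show u.comp (Φ.comp (Dit Φ n)) = (Ψ.comp (Dit Ψ n)).comp u
    rw [← comp_assoc, hcomm, comp_assoc, ih, ← comp_assoc]

lemma intertwine (hq2 : 2 ≤ q) (hq : q = p ^ e) [Fact p.Prime] [CharP F p]
    (alg : Fq →+* F) (halg : ∀ c : Fq, (alg c) ^ q = alg c)
    {u Φ Ψ : F[X]} (hu : IsLinQ q u) (hcomm : u.comp Φ = Ψ.comp u) (a : Fq[X]) :
    u.comp (phiA alg Φ a) = (phiA alg Ψ a).comp u := by
  induction a using Polynomial.induction_on' with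
  | add P Q hP hQ => rw [phiA_add, phiA_add, hu.comp_add hq, hP, hQ, add_comp]
  | monomial n c =>
    rw [phiA_monomial, phiA_monomial, hu.comp_C_mul (halg c), Dit_intertwine hcomm,
      mul_comp, C_comp]

lemma coeff_one_Dit (hq2 : 2 ≤ q) (hq : q = p ^ e) [Fact p.Prime] [CharP F p]
    {Φ : F[X]} (hΦ : IsLinQ q Φ) (n : ℕ) :
    (Dit Φ n).coeff 1 = (Φ.coeff 1) ^ n := by
  induction n with
  | zero => rw [Dit, coeff_X_one, pow_zero]
  | succ n ih =>
    show (Φ.comp (Dit Φ n)).coeff 1 = _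
    have h0 : (1 : ℕ) = q ^ 0 := (pow_zero q).symm
    have := coeff_comp_qpow_outer (k := 0) hq2 hq (Dit Φ n) hΦ (fun i hi => absurd hi (by omega))
    rw [pow_zero, pow_one] at this
    rw [this, ih]
    ring

lemma coeff_one_phiA (hq2 : 2 ≤ q) (hq : q = p ^ e) [Fact p.Prime] [CharP F p]
    (alg : Fq →+* F) {Φ : F[X]} (hΦ : IsLinQ q Φ) (a : Fq[X]) :
    (phiA alg Φ a).coeff 1 = eval₂ alg (Φ.coeff 1) a := by
  unfold phiA
  rw [sum_def, finset_sum_coeff, eval₂_eq_sum, sum_def]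
  refine Finset.sum_congr rfl fun m _ => ?_
  rw [coeff_C_mul, coeff_one_Dit hq2 hq hΦ]

lemma Dit_ne_zero_natDegree {Φ : F[X]} (hd : 2 ≤ Φ.natDegree) (n : ℕ) :
    Dit Φ n ≠ 0 ∧ (Dit Φ n).natDegree = Φ.natDegree ^ n := by
  induction n with
  | zero => exact ⟨X_ne_zero, by rw [Dit, natDegree_X, pow_zero]⟩
  | succ n ih =>
    obtain ⟨h0, hdeg⟩ := ih
    constructor
    · show Φ.comp (Dit Φ n) ≠ 0
      intro hc
      rcases (comp_eq_zero_iff).1 hc with h | ⟨_, h⟩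
      · rw [h, natDegree_zero] at hd; omega
      · have : (Dit Φ n).natDegree = 0 := by rw [h, natDegree_C]
        rw [hdeg] at this
        have : 0 < Φ.natDegree ^ n := pow_pos (by omega) n
        omega
    · show (Φ.comp (Dit Φ n)).natDegree = _
      rw [natDegree_comp, hdeg, pow_succ]
      ring

lemma phiA_ne_zero {Φ : F[X]} (hd : 2 ≤ Φ.natDegree) (alg : Fq →+* F)
    (hinj : Function.Injective alg) {a : Fq[X]} (ha : a ≠ 0) : phiA alg Φ a ≠ 0 := by
  set N := a.natDegree with hN
  set d := Φ.natDegree with hdd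
  have hcoeff : (phiA alg Φ a).coeff (d ^ N) ≠ 0 := by
    unfold phiA
    rw [sum_def, finset_sum_coeff, Finset.sum_eq_single N]
    · rw [coeff_C_mul, ← (Dit_ne_zero_natDegree hd N).2, coeff_natDegree]
      apply mul_ne_zero
      · intro h
        have h1 : a.coeff N = 0 := hinj (h.trans (map_zero alg).symm)
        have h2 : a.leadingCoeff = 0 := by rw [← coeff_natDegree, ← hN]; exact h1
        exact ha (leadingCoeff_eq_zero.1 h2)
      · exact leadingCoeff_ne_zero.2 (Dit_ne_zero_natDegree hd N).1
    · intro m hm hne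
      have hmN : m < N := lt_of_le_of_ne (le_natDegree_of_mem_supp m hm) hne
      have hlt : (Dit Φ m).natDegree < d ^ N := by
        rw [(Dit_ne_zero_natDegree hd m).2]
        exact Nat.pow_lt_pow_right (by omega) hmN
      rw [coeff_C_mul, coeff_eq_zero_of_natDegree_lt hlt, mul_zero]
    · intro hN'
      exact absurd (natDegree_mem_support_of_nonzero ha) hN'
  intro h
  rw [h, coeff_zero] at hcoeff
  exact hcoeff rfl

lemma aeval_Dit {A : Type*} [CommRing A] [Algebra F A] (Φ : F[X]) (n : ℕ) (x : A) :
    aeval x (Dit Φ n) = (fun y : A => aeval y Φ)^[n] x := by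
  induction n with
  | zero => rw [Dit, Function.iterate_zero_apply, aeval_X]
  | succ n ih =>
    show aeval x (Φ.comp (Dit Φ n)) = _
    rw [aeval_comp, ih, Function.iterate_succ_apply']

lemma aeval_phiA {A : Type*} [CommRing A] [Algebra F A] (alg : Fq →+* F) (Φ : F[X])
    (a : Fq[X]) (x : A) :
    aeval x (phiA alg Φ a) =
      ∑ i ∈ a.support, algebraMap F A (alg (a.coeff i)) * (fun y : A => aeval y Φ)^[i] x := by
  unfold phiA
  rw [sum_def, map_sum]
  refine Finset.sum_congr rfl fun i _ => ?_
  rw [map_mul, aeval_C, aeval_Dit]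

end PhiA

section Division

variable [Fact p.Prime] [CharP F p]

lemma comp_right_cancel {P Q W : F[X]} (hW : 0 < W.natDegree)
    (h : P.comp W = Q.comp W) : P = Q := by
  have h1 : (P - Q).comp W = 0 := by rw [sub_comp, h, sub_self]
  rcases comp_eq_zero_iff.1 h1 with h2 | ⟨_, h2⟩
  · exact sub_eq_zero.1 h2
  · rw [h2, natDegree_C] at hW; omega

lemma lin_div_aux (hq2 : 2 ≤ q) (hq : q = p ^ e) {u : F[X]} (hu : IsLinQ q u)
    (hu0 : u ≠ 0) :
    ∀ (n : ℕ) (f : F[X]), f.natDegree ≤ n → IsLinQ q f → u ∣ f →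
      ∃ g, IsLinQ q g ∧ f = g.comp u := by
  intro n
  induction n with
  | zero =>
    intro f hdeg hf hdvd
    have hf0 : f = 0 := by
      by_contra h0
      have h1 : f.natDegree ∈ f.support := natDegree_mem_support_of_nonzero h0
      obtain ⟨i, hi⟩ := hf _ h1
      have : f.natDegree = 0 := by omega
      rw [this] at hi
      have : 0 < q ^ i := pow_pos (by omega) i
      omega
    exact ⟨0, isLinQ_zero, by rw [hf0, zero_comp]⟩
  | succ n ih =>
    intro f hdeg hf hdvd
    rcases eq_or_ne f 0 with rfl | hf0
    · exact ⟨0, isLinQ_zero, by rw [zero_comp]⟩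
    obtain ⟨m, hm⟩ := hf _ (natDegree_mem_support_of_nonzero hf0)
    obtain ⟨k, hk⟩ := hu _ (natDegree_mem_support_of_nonzero hu0)
    have hle : u.natDegree ≤ f.natDegree := natDegree_le_of_dvd hdvd hf0
    have hkm : k ≤ m := by
      rw [hm, hk] at hle
      exact (Nat.pow_le_pow_iff_right (by omega)).1 hle
    set j := m - k with hj
    set c := f.leadingCoeff / u.leadingCoeff ^ q ^ j with hc
    have hcne : c ≠ 0 := by
      apply div_ne_zero (leadingCoeff_ne_zero.2 hf0)
      exact pow_ne_zero _ (leadingCoeff_ne_zero.2 hu0)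
    set t : F[X] := C c * u ^ q ^ j with ht
    have htne : t ≠ 0 := by
      apply mul_ne_zero (by rwa [Ne, C_eq_zero])
      exact pow_ne_zero _ hu0
    have htdeg : t.natDegree = f.natDegree := by
      rw [ht, natDegree_C_mul hcne, natDegree_pow, hk, hm, ← pow_add]
      congr 1
      omega
    have htlead : t.leadingCoeff = f.leadingCoeff := by
      rw [ht, leadingCoeff_mul, leadingCoeff_C, leadingCoeff_pow, hc,
        div_mul_cancel₀]
      exact pow_ne_zero _ (leadingCoeff_ne_zero.2 hu0)
    have hgt : IsLinQ q t := by
      have h1 := (hu.pow hq2 hq j).C_mul c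
      rwa [← ht] at h1
    have hdvdt : u ∣ t := Dvd.dvd.mul_left (dvd_pow_self u (by positivity)) _
    rcases eq_or_ne (f - t) 0 with hft | hft
    · refine ⟨C c * X ^ q ^ j, isLinQ_C_mul_X_pow c j, ?_⟩
      rw [mul_comp, C_comp, X_pow_comp, ← ht]
      rw [sub_eq_zero] at hft
      exact hft
    · have hdeglt : (f - t).natDegree < f.natDegree := by
        apply natDegree_lt_natDegree hft
        apply degree_sub_lt _ hf0 htlead.symm
        rw [degree_eq_natDegree hf0, degree_eq_natDegree htne, htdeg]
      have hrec := ih (f - t) (by omega) (hf.sub hgt) (dvd_sub hdvd hdvdt)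
      obtain ⟨g', hg', hfg'⟩ := hrec
      refine ⟨g' + C c * X ^ q ^ j, hg'.add (isLinQ_C_mul_X_pow c j), ?_⟩
      rw [add_comp, mul_comp, C_comp, X_pow_comp, ← ht, ← hfg']
      ring

/-- Factor out `X^(q^k)` from a linearized polynomial with vanishing low coefficients. -/
lemma factor_tau_pow (hq2 : 2 ≤ q) {k : ℕ} {f : F[X]} (hf : IsLinQ q f)
    (hfl : ∀ i < k, f.coeff (q ^ i) = 0) :
    ∃ w : F[X], IsLinQ q w ∧ f = w.comp (X ^ q ^ k) := by
  have hqk : (0 : ℕ) < q ^ k := pow_pos (by omega) k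
  have hsupp : ∀ m ∈ f.support, ∃ i, k ≤ i ∧ m = q ^ i := by
    intro m hm
    obtain ⟨i, rfl⟩ := hf m hm
    refine ⟨i, ?_, rfl⟩
    by_contra hik
    exact (mem_support_iff.1 hm) (hfl i (by omega))
  refine ⟨contract (q ^ k) f, ?_, ?_⟩
  · intro m hm
    rw [mem_support_iff, coeff_contract hqk.ne'] at hm
    obtain ⟨i, hik, hi⟩ := hsupp _ (mem_support_iff.2 hm)
    refine ⟨i - k, ?_⟩
    have : m * q ^ k = q ^ (i - k) * q ^ k := by
      rw [← pow_add, hi]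
      congr 1
      omega
    exact Nat.eq_of_mul_eq_mul_right hqk this
  · rw [← expand_eq_comp_X_pow]
    ext n
    rw [coeff_expand hqk, ]
    split_ifs with hdvd
    · rw [coeff_contract hqk.ne', Nat.div_mul_cancel hdvd]
    · symm
      by_contra hne
      obtain ⟨i, hik, hi⟩ := hsupp n (mem_support_iff.2 (Ne.symm hne))
      exact hdvd (hi ▸ pow_dvd_pow q hik)

lemma comp_X_pow_left (hq : q = p ^ e) (f : F[X]) (m : ℕ) :
    (X ^ q ^ m).comp f = (f.map (frobenius F p ^ (e * m))).comp (X ^ q ^ m) := by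
  rw [X_pow_comp, pow_q_pow_eq hq, map_expand, expand_eq_comp_X_pow]

lemma lin_derivative (hq2 : 2 ≤ q) (hq : q = p ^ e) (he : e ≠ 0) {u : F[X]}
    (hu : IsLinQ q u) : derivative u = C (u.coeff 1) := by
  have hqF : ((q : ℕ) : F) = 0 := by
    rw [hq, Nat.cast_pow, CharP.cast_eq_zero F p, zero_pow he]
  ext n
  rw [coeff_derivative]
  cases n with
  | zero =>
    rw [coeff_C, if_pos rfl]
    norm_num
  | succ n =>
    rw [coeff_C, if_neg (by omega)]
    by_cases hmem : (n + 1 + 1) ∈ u.support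
    · obtain ⟨i, hi⟩ := hu _ hmem
      have hi1 : 1 ≤ i := by
        by_contra h
        have : i = 0 := by omega
        rw [this, pow_zero] at hi
        omega
      have : ((n + 1 + 1 : ℕ) : F) = 0 := by
        have : (n + 1 + 1 : ℕ) = q ^ i := hi
        rw [this, Nat.cast_pow, hqF, zero_pow (by omega)]
      push_cast at this ⊢
      rw [this, mul_zero]
    · rw [notMem_support_iff.1 hmem, zero_mul]

end Division

section Roots

lemma dvd_of_roots {K : Type*} [Field K] [IsAlgClosed K] [DecidableEq K] {u f : K[X]}
    (hsep : u.Separable) (hf0 : f ≠ 0)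
    (h : ∀ x : K, u.IsRoot x → f.IsRoot x) : u ∣ f := by
  have hu0 : u ≠ 0 := hsep.ne_zero
  have hroots : u.roots ≤ f.roots := by
    rw [Multiset.le_iff_count]
    intro x
    by_cases hx : x ∈ u.roots
    · rw [Multiset.count_eq_one_of_mem (nodup_roots hsep) hx]
      apply Multiset.one_le_count_iff_mem.2
      rw [mem_roots hf0]
      exact h x ((mem_roots hu0).1 hx)
    · rw [Multiset.count_eq_zero_of_notMem hx]
      omega
  have h1 : u = C u.leadingCoeff * (u.roots.map fun a => X - C a).prod :=
    (IsAlgClosed.splits u).eq_prod_roots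
  have h2 : (u.roots.map fun a => X - C a).prod ∣ f := by
    apply dvd_trans _ (prod_multiset_X_sub_C_dvd f)
    exact Multiset.prod_dvd_prod_of_le (Multiset.map_le_map hroots)
  rw [h1]
  have hunit : IsUnit (C u.leadingCoeff) :=
    isUnit_C.2 (isUnit_iff_ne_zero.2 (leadingCoeff_ne_zero.2 hu0))
  exact (IsUnit.mul_left_dvd hunit).2 h2

end Roots

section Main

variable {Fq : Type*} [Field Fq] [Fact p.Prime] [CharP F p]

lemma torsion (hq2 : 2 ≤ q) (hq : q = p ^ e)
    (alg : Fq →+* F) (halg : ∀ c : Fq, (alg c) ^ q = alg c) {u Φ Ψ : F[X]}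
    (hΦ : IsLinQ q Φ) (hΨ : IsLinQ q Ψ) (hu : IsLinQ q u) (hu0 : u ≠ 0)
    (hcomm : u.comp Φ = Ψ.comp u) :
    ∃ a : Fq[X], a ≠ 0 ∧
      ∀ x : AlgebraicClosure F, aeval x u = 0 → aeval x (phiA alg Φ a) = 0 := by
  classical
  set K := AlgebraicClosure F
  set S : Set K := {x | aeval x u = 0} with hSdef
  have hS : S.Finite := by
    have h1 : S = {x | IsRoot (u.map (algebraMap F K)) x} := by
      ext x
      simp only [hSdef, Set.mem_setOf_eq, IsRoot, eval_map, aeval_def]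
    rw [h1]
    exact finite_setOf_isRoot (map_ne_zero hu0)
  have hroot : ∀ (x : K) (a : Fq[X]), aeval x u = 0 →
      aeval (aeval x (phiA alg Φ a)) u = 0 := by
    intro x a hx
    have h1 := intertwine hq2 hq alg halg hu hcomm a
    have h2 : aeval x (u.comp (phiA alg Φ a)) = aeval x ((phiA alg Ψ a).comp u) := by rw [h1]
    rw [aeval_comp, aeval_comp, hx] at h2
    rw [h2, aeval_def, eval₂_at_zero, (isLinQ_phiA hq2 hq alg hΨ a).coeff_zero hq2, map_zero]
  have hann : ∀ x : K, aeval x u = 0 → ∃ b : Fq[X], b ≠ 0 ∧ aeval x (phiA alg Φ b) = 0 := by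
    intro x hx
    haveI : Finite S := hS.to_subtype
    haveI : Infinite Fq[X] := Polynomial.infinite
    let eF : Fq[X] → S := fun a => ⟨aeval x (phiA alg Φ a), hroot x a hx⟩
    obtain ⟨a1, a2, hne, heq⟩ := Finite.exists_ne_map_eq_of_infinite eF
    refine ⟨a1 - a2, sub_ne_zero.2 hne, ?_⟩
    rw [phiA_sub, map_sub]
    have h3 := congrArg Subtype.val heq
    simp only [eF] at h3
    rw [h3, sub_self]
  haveI : Fintype S := hS.fintype
  choose b hb0 hb using fun (x : S) => hann x x.2
  refine ⟨∏ x : S, b x, Finset.prod_ne_zero_iff.2 (fun x _ => hb0 x), ?_⟩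
  intro x hx
  set xS : S := ⟨x, hx⟩ with hxS
  have hprod : (∏ y : S, b y) = (∏ y ∈ Finset.univ.erase xS, b y) * b xS :=
    (Finset.prod_erase_mul _ _ (Finset.mem_univ xS)).symm
  rw [hprod, phiA_mul hq2 hq alg hΦ halg, aeval_comp]
  have hbx : aeval x (phiA alg Φ (b xS)) = 0 := hb xS
  rw [hbx, aeval_def, eval₂_at_zero, (isLinQ_phiA hq2 hq alg hΦ _).coeff_zero hq2, map_zero]

lemma sep_case (hq2 : 2 ≤ q) (hq : q = p ^ e) (he : e ≠ 0)
    (alg : Fq →+* F) (halg : ∀ c : Fq, (alg c) ^ q = alg c) {u Φ Ψ : F[X]}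
    (hΦ : IsLinQ q Φ) (hΨ : IsLinQ q Ψ) (hu : IsLinQ q u) (hu0 : u ≠ 0)
    (hu1 : u.coeff 1 ≠ 0) (hcomm : u.comp Φ = Ψ.comp u) :
    ∃ a : Fq[X], a ≠ 0 ∧ ∃ v : F[X], IsLinQ q v ∧ v.comp u = phiA alg Φ a := by
  classical
  obtain ⟨a, ha0, hroots⟩ := torsion hq2 hq alg halg hΦ hΨ hu hu0 hcomm
  set f := phiA alg Φ a with hfdef
  rcases eq_or_ne f 0 with hf0 | hf0
  · exact ⟨a, ha0, 0, isLinQ_zero, by rw [zero_comp, ← hfdef, hf0]⟩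
  have hder : derivative u = C (u.coeff 1) := lin_derivative hq2 hq he hu
  have hsep : u.Separable := by
    rw [Polynomial.separable_def, hder]
    exact ⟨0, C (u.coeff 1)⁻¹, by rw [zero_mul, zero_add, ← C_mul, inv_mul_cancel₀ hu1, C_1]⟩
  set K := AlgebraicClosure F
  have hdvdbar : u.map (algebraMap F K) ∣ f.map (algebraMap F K) := by
    apply dvd_of_roots hsep.map (map_ne_zero hf0)
    intro x hx
    have hx' : aeval x u = 0 := by
      rw [aeval_def, ← eval_map]
      exact hx
    have h2 := hroots x hx'
    rwa [IsRoot, eval_map, ← aeval_def]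
  have hdvd : u ∣ f := (map_dvd_map' (algebraMap F K)).1 hdvdbar
  obtain ⟨g, hg, hfg⟩ := lin_div_aux hq2 hq hu hu0 f.natDegree f le_rfl
    (isLinQ_phiA hq2 hq alg hΦ a) hdvd
  exact ⟨a, ha0, g, hg, hfg.symm⟩

lemma frob_case (hq2 : 2 ≤ q) (hq : q = p ^ e)
    (alg : Fq →+* F) (halg : ∀ c : Fq, (alg c) ^ q = alg c)
    {Φ : F[X]} (hΦ : IsLinQ q Φ) {m : Fq[X]}
    (hmz : eval₂ alg (Φ.coeff 1) m = 0) (k : ℕ) :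
    ∃ v₂ : F[X], IsLinQ q v₂ ∧ phiA alg Φ (m ^ k) = v₂.comp (X ^ q ^ k) := by
  induction k with
  | zero =>
    refine ⟨X, isLinQ_X, ?_⟩
    rw [pow_zero, phiA_one, pow_zero, pow_one, X_comp]
  | succ k ih =>
    obtain ⟨v', hv', hphi⟩ := ih
    have hlinm : IsLinQ q (phiA alg Φ m) := isLinQ_phiA hq2 hq alg hΦ m
    have hc1 : (phiA alg Φ m).coeff 1 = 0 := by
      rw [coeff_one_phiA hq2 hq alg hΦ]; exact hmz
    obtain ⟨w, hw, hwf⟩ := factor_tau_pow hq2 (k := 1) hlinm (by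
      intro i hi
      have : i = 0 := by omega
      rwa [this, pow_zero])
    refine ⟨v'.comp (w.map (frobenius F p ^ (e * k))), hv'.comp hq2 hq (hw.map _), ?_⟩
    have h1 : phiA alg Φ (m ^ (k + 1)) = (phiA alg Φ (m ^ k)).comp (phiA alg Φ m) := by
      rw [pow_succ, phiA_mul hq2 hq alg hΦ halg]
    have h2 : (X ^ q ^ k : F[X]).comp (X ^ q ^ 1) = X ^ q ^ (k + 1) := by
      rw [X_pow_comp, ← pow_mul]
      congr 1
      rw [← pow_add]
      congr 1
      omega
    rw [h1, hphi, hwf, comp_assoc, ← comp_assoc (X ^ q ^ k) w (X ^ q ^ 1),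
      comp_X_pow_left hq w k, comp_assoc, h2, ← comp_assoc]

lemma dual_exists (hq2 : 2 ≤ q) (hq : q = p ^ e) (he : e ≠ 0)
    (alg : Fq →+* F) (halg : ∀ c : Fq, (alg c) ^ q = alg c) {u φT ψT : F[X]}
    (hφ : IsLinQ q φT) (hψ : IsLinQ q ψT) (hu : IsLinQ q u) (hu0 : u ≠ 0)
    (hcomm : u.comp φT = ψT.comp u) (hz : ψT.coeff 1 = φT.coeff 1)
    (hintegral : ∀ k : ℕ, k ≠ 0 → (φT.coeff 1) ^ q ^ k = φT.coeff 1 →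
      ∃ m : Fq[X], m ≠ 0 ∧ eval₂ alg (φT.coeff 1) m = 0) :
    ∃ a : Fq[X], a ≠ 0 ∧ ∃ v : F[X], IsLinQ q v ∧ v.comp u = phiA alg φT a := by
  classical
  have hexk : ∃ i, u.coeff (q ^ i) ≠ 0 := by
    obtain ⟨m0, hm0⟩ := hu _ (natDegree_mem_support_of_nonzero hu0)
    refine ⟨m0, ?_⟩
    rw [← hm0]
    exact mem_support_iff.1 (natDegree_mem_support_of_nonzero hu0)
  set k := Nat.find hexk with hkdef
  have hk : u.coeff (q ^ k) ≠ 0 := Nat.find_spec hexk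
  have hmin : ∀ i < k, u.coeff (q ^ i) = 0 := by
    intro i hi
    have := Nat.find_min hexk hi
    simpa using this
  obtain ⟨w, hw, hwu⟩ := factor_tau_pow hq2 hu hmin
  have hqkpos : (0:ℕ) < q ^ k := pow_pos (by omega) k
  have hw1 : w.coeff 1 = u.coeff (q ^ k) := by
    have h1 : u = expand F (q ^ k) w := by rw [expand_eq_comp_X_pow]; exact hwu
    rw [h1, coeff_expand hqkpos, if_pos dvd_rfl, Nat.div_self hqkpos]
  have hu1w : w.coeff 1 ≠ 0 := by rw [hw1]; exact hk
  have hw0 : w ≠ 0 := fun h => hu1w (by rw [h, coeff_zero])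
  set σ := frobenius F p ^ (e * k) with hσ
  set Φ' := φT.map σ with hΦ'
  have hΦ'lin : IsLinQ q Φ' := hφ.map σ
  have hτφ : (X ^ q ^ k : F[X]).comp φT = Φ'.comp (X ^ q ^ k) := comp_X_pow_left hq φT k
  have hτdeg : (0:ℕ) < ((X : F[X]) ^ q ^ k).natDegree := by
    rw [natDegree_X_pow]; exact hqkpos
  have hwcomm : w.comp Φ' = ψT.comp w := by
    apply comp_right_cancel hτdeg
    rw [comp_assoc, ← hτφ, ← comp_assoc, ← hwu, hcomm, hwu, ← comp_assoc]
  have hτlin : IsLinQ q ((X : F[X]) ^ q ^ k) := by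
    have h2 := isLinQ_C_mul_X_pow (q := q) (1 : F) k
    rwa [C_1, one_mul] at h2
  obtain ⟨a1, ha1, v1, hv1lin, hv1⟩ :=
    sep_case hq2 hq he alg halg hΦ'lin hψ hw hw0 hu1w hwcomm
  have hτint : ∀ a, (X ^ q ^ k : F[X]).comp (phiA alg φT a) =
      (phiA alg Φ' a).comp (X ^ q ^ k) :=
    fun a => intertwine hq2 hq alg halg hτlin hτφ a
  have hfrob : ∃ a2 : Fq[X], a2 ≠ 0 ∧ ∃ v2, IsLinQ q v2 ∧
      phiA alg φT a2 = v2.comp (X ^ q ^ k) := by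
    rcases Nat.eq_zero_or_pos k with hk0 | hkpos
    · refine ⟨1, one_ne_zero, X, isLinQ_X, ?_⟩
      rw [phiA_one, hk0, pow_zero, pow_one, X_comp]
    · have hzeq : (φT.coeff 1) ^ q ^ k = φT.coeff 1 := by
        have hL := coeff_comp_qpow_outer (k := k) hq2 hq φT hu hmin
        have hR := coeff_comp_qpow_inner (k := k) hq2 hq hψ hmin
        rw [hcomm] at hL
        rw [hL, hz] at hR
        -- hR : u.coeff (q^k) * (φT.coeff 1)^(q^k) = φT.coeff 1 * u.coeff (q^k)
        have h3 : u.coeff (q ^ k) * (φT.coeff 1) ^ q ^ k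
            = u.coeff (q ^ k) * φT.coeff 1 := by
          rw [hR]; ring
        exact mul_left_cancel₀ hk h3
      obtain ⟨m, hm0, hmz⟩ := hintegral k (by omega) hzeq
      obtain ⟨v2, hv2lin, hv2⟩ := frob_case hq2 hq alg halg hφ hmz k
      exact ⟨m ^ k, pow_ne_zero k hm0, v2, hv2lin, hv2⟩
  obtain ⟨a2, ha2, v2, hv2lin, hv2⟩ := hfrob
  refine ⟨a2 * a1, mul_ne_zero ha2 ha1, v2.comp v1, hv2lin.comp hq2 hq hv1lin, ?_⟩
  calc (v2.comp v1).comp u = v2.comp (v1.comp u) := comp_assoc _ _ _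
    _ = v2.comp ((v1.comp w).comp (X ^ q ^ k)) := by rw [hwu]; simp only [comp_assoc]
    _ = v2.comp ((X ^ q ^ k).comp (phiA alg φT a1)) := by rw [hv1, ← hτint]
    _ = (phiA alg φT a2).comp (phiA alg φT a1) := by rw [← comp_assoc, ← hv2]
    _ = phiA alg φT (a2 * a1) := (phiA_mul hq2 hq alg hφ halg a2 a1).symm

lemma drinfeld_shape (hq2 : 2 ≤ q) {z : F} {r : ℕ} (hr : 1 ≤ r) {g : ℕ → F}
    (hgr : g r ≠ 0) :
    IsLinQ q (C z * X + ∑ i ∈ Finset.Icc 1 r, C (g i) * X ^ q ^ i) ∧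
    (C z * X + ∑ i ∈ Finset.Icc 1 r, C (g i) * X ^ q ^ i).coeff 1 = z ∧
    (C z * X + ∑ i ∈ Finset.Icc 1 r, C (g i) * X ^ q ^ i).natDegree = q ^ r := by
  set Φ := C z * X + ∑ i ∈ Finset.Icc 1 r, C (g i) * X ^ q ^ i with hΦ
  have hsumc : ∀ n : ℕ, (∑ i ∈ Finset.Icc 1 r, C (g i) * X ^ q ^ i).coeff n
      = ∑ i ∈ Finset.Icc 1 r, g i * (if n = q ^ i then 1 else 0) := by
    intro n
    rw [finset_sum_coeff]
    refine Finset.sum_congr rfl fun i _ => ?_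
    rw [coeff_C_mul, coeff_X_pow]
  have hlin : IsLinQ q Φ := by
    intro m hm
    rw [mem_support_iff] at hm
    by_contra hno
    push_neg at hno
    apply hm
    rw [hΦ, coeff_add, coeff_C_mul, coeff_X, hsumc]
    have h1 : ¬ (1 = m) := fun h => hno 0 (by rw [pow_zero]; omega)
    rw [if_neg h1, mul_zero, zero_add]
    apply Finset.sum_eq_zero
    intro i _
    rw [if_neg (hno i), mul_zero]
  have hc1 : Φ.coeff 1 = z := by
    rw [hΦ, coeff_add, coeff_C_mul, coeff_X, if_pos rfl, mul_one, hsumc]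
    have h2 : ∑ i ∈ Finset.Icc 1 r, g i * (if (1:ℕ) = q ^ i then 1 else 0) = 0 := by
      apply Finset.sum_eq_zero
      intro i hi
      rw [Finset.mem_Icc] at hi
      have : (1:ℕ) ≠ q ^ i := by
        have : q ≤ q ^ i := Nat.le_self_pow (by omega) q
        omega
      rw [if_neg this, mul_zero]
    rw [h2, add_zero]
  have hcr : Φ.coeff (q ^ r) = g r := by
    rw [hΦ, coeff_add, coeff_C_mul, coeff_X, hsumc]
    have h1 : ¬ (1 = q ^ r) := by
      have : q ≤ q ^ r := Nat.le_self_pow (by omega) q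
      omega
    rw [if_neg h1, mul_zero, zero_add]
    rw [Finset.sum_eq_single r]
    · rw [if_pos rfl, mul_one]
    · intro i hi hir
      have : q ^ r ≠ q ^ i := fun h => hir ((Nat.pow_right_injective hq2 h).symm)
      rw [if_neg this, mul_zero]
    · intro h
      exact absurd (Finset.mem_Icc.2 ⟨hr, le_rfl⟩) h
  refine ⟨hlin, hc1, ?_⟩
  apply le_antisymm
  · rw [hΦ]
    apply le_trans (natDegree_add_le _ _)
    apply max_le
    · apply le_trans (natDegree_C_mul_le _ _)
      rw [natDegree_X]
      have : q ≤ q ^ r := Nat.le_self_pow (by omega) q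
      omega
    · apply natDegree_sum_le_of_forall_le
      intro i hi
      apply le_trans (natDegree_C_mul_le _ _)
      rw [natDegree_X_pow]
      exact Nat.pow_le_pow_right (by omega) (Finset.mem_Icc.1 hi).2
  · exact le_natDegree_of_ne_zero (by rw [hcr]; exact hgr)

end Main

end DualIsogenyAux

open DualIsogenyAux in
/-- Existence of the dual isogeny: if `u` is an isogeny `φ → ψ` between rank-`r` Drinfeld
modules over `(F, z)`, there are a nonzero `a ∈ 𝔽_q[T]` and an isogeny `v : ψ → φ` such that,
on an algebraic closure `F̄` of `F`, `v ∘ u` acts as `φ_a = a(ℓ_φ)` and `u ∘ v` acts as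
`ψ_a = a(ℓ_ψ)`, where `ℓ_φ(x) = φ_T(x)` and `ℓ_ψ(x) = ψ_T(x)`. -/
theorem dual_isogeny_exists
    (Fq : Type*) [Field Fq] [Fintype Fq] (q : ℕ) (hq : Fintype.card Fq = q)
    (F : Type*) [Field F] [Algebra Fq F]
    (z : F) (r : ℕ) (hr : 1 ≤ r) (g h : ℕ → F) (hgr : g r ≠ 0) (hhr : h r ≠ 0)
    (φT ψT : Polynomial F)
    (hφT : φT = Polynomial.C z * Polynomial.X +
      ∑ i ∈ Finset.Icc 1 r, Polynomial.C (g i) * Polynomial.X ^ q ^ i)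
    (hψT : ψT = Polynomial.C z * Polynomial.X +
      ∑ i ∈ Finset.Icc 1 r, Polynomial.C (h i) * Polynomial.X ^ q ^ i)
    (u : Polynomial F) (hu : u ≠ 0)
    (hulin : ∀ m ∈ u.support, ∃ i : ℕ, m = q ^ i)
    (hcomm : u.comp φT = ψT.comp u) :
    ∃ a : Polynomial Fq, a ≠ 0 ∧
      ∃ v : Polynomial F, v ≠ 0 ∧ (∀ m ∈ v.support, ∃ i : ℕ, m = q ^ i) ∧
        v.comp ψT = φT.comp v ∧
        (∀ x : AlgebraicClosure F,
          Polynomial.aeval (Polynomial.aeval x u) v =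
            ∑ i ∈ a.support,
              algebraMap F (AlgebraicClosure F) (algebraMap Fq F (a.coeff i)) *
                ((fun y : AlgebraicClosure F => Polynomial.aeval y φT)^[i] x)) ∧
        (∀ x : AlgebraicClosure F,
          Polynomial.aeval (Polynomial.aeval x v) u =
            ∑ i ∈ a.support,
              algebraMap F (AlgebraicClosure F) (algebraMap Fq F (a.coeff i)) *
                ((fun y : AlgebraicClosure F => Polynomial.aeval y ψT)^[i] x)) := by
  classical
  have hq2 : 2 ≤ q := by
    rw [← hq]
    exact Fintype.one_lt_card
  set p := ringChar Fq with hp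
  haveI : Fact p.Prime := ⟨CharP.char_is_prime Fq p⟩
  obtain ⟨n, hpprime, hcard⟩ := FiniteField.card Fq p
  set e := (n : ℕ) with hedef
  have he : e ≠ 0 := n.pos.ne'
  have hqpe : q = p ^ e := by rw [← hq, hcard]
  haveI : CharP F p := charP_of_injective_algebraMap (algebraMap Fq F).injective p
  have halg : ∀ c : Fq, (algebraMap Fq F c) ^ q = algebraMap Fq F c := by
    intro c
    rw [← map_pow, ← hq, FiniteField.pow_card]
  obtain ⟨hφlin, hφc1, hφdeg⟩ := drinfeld_shape (F := F) hq2 hr hgr (z := z)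
  rw [← hφT] at hφlin hφc1 hφdeg
  obtain ⟨hψlin, hψc1, hψdeg⟩ := drinfeld_shape (F := F) hq2 hr hhr (z := z)
  rw [← hψT] at hψlin hψc1 hψdeg
  have hintegral : ∀ k : ℕ, k ≠ 0 → (φT.coeff 1) ^ q ^ k = φT.coeff 1 →
      ∃ m : Polynomial Fq, m ≠ 0 ∧ Polynomial.eval₂ (algebraMap Fq F) (φT.coeff 1) m = 0 := by
    intro k hk0 hzeq
    have hqk2 : 2 ≤ q ^ k := le_trans hq2 (Nat.le_self_pow hk0 q)
    have hzint : IsIntegral Fq (φT.coeff 1) := by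
      refine ⟨Polynomial.X ^ q ^ k - Polynomial.X, ?_, ?_⟩
      · have h3 : (Polynomial.X : Polynomial Fq).degree < ((q ^ k : ℕ) : WithBot ℕ) := by
          rw [Polynomial.degree_X]
          exact_mod_cast (by omega : 1 < q ^ k)
        exact Polynomial.monic_X_pow_sub h3
      · rw [Polynomial.eval₂_sub, Polynomial.eval₂_X_pow, Polynomial.eval₂_X, hzeq, sub_self]
    refine ⟨minpoly Fq (φT.coeff 1), minpoly.ne_zero hzint, ?_⟩
    rw [← Polynomial.aeval_def]
    exact minpoly.aeval Fq (φT.coeff 1)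
  obtain ⟨a, ha0, v, hvlin, hva⟩ :=
    dual_exists hq2 hqpe he (algebraMap Fq F) halg hφlin hψlin hulin hu hcomm
      (hψc1.trans hφc1.symm) hintegral
  have hφdeg2 : 2 ≤ φT.natDegree := by
    rw [hφdeg]
    exact le_trans hq2 (Nat.le_self_pow (by omega) q)
  have hpane : phiA (algebraMap Fq F) φT a ≠ 0 :=
    phiA_ne_zero hφdeg2 (algebraMap Fq F) (algebraMap Fq F).injective ha0
  have hv0 : v ≠ 0 := by
    intro hzero
    rw [hzero, Polynomial.zero_comp] at hva
    exact hpane hva.symm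
  have hudeg : 0 < u.natDegree := by
    rcases Nat.eq_zero_or_pos u.natDegree with h0 | h1
    · exfalso
      apply hu
      have h2 := Polynomial.eq_C_of_natDegree_eq_zero h0
      have h3 : u.coeff 0 = 0 := IsLinQ.coeff_zero hq2 hulin
      rw [h3, Polynomial.C_0] at h2
      exact h2
    · exact h1
  have hint_u := intertwine hq2 hqpe (algebraMap Fq F) halg hulin hcomm a
  have huv : u.comp v = phiA (algebraMap Fq F) ψT a := by
    apply comp_right_cancel hudeg
    rw [Polynomial.comp_assoc, hva, hint_u]
  have hXφ : phiA (algebraMap Fq F) φT Polynomial.X = φT := by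
    have h1 : (Polynomial.X : Polynomial Fq) = Polynomial.monomial 1 1 :=
      (Polynomial.monomial_one_one_eq_X).symm
    rw [h1, phiA_monomial, map_one, Polynomial.C_1, one_mul, Dit_succ, Dit_zero,
      Polynomial.comp_X]
  have hcommφa : (phiA (algebraMap Fq F) φT a).comp φT
      = φT.comp (phiA (algebraMap Fq F) φT a) := by
    have h1 := phiA_mul hq2 hqpe (algebraMap Fq F) hφlin halg a Polynomial.X
    have h2 := phiA_mul hq2 hqpe (algebraMap Fq F) hφlin halg Polynomial.X a
    rw [hXφ] at h1 h2
    rw [← h1, ← h2, mul_comm]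
  have hvψ : v.comp ψT = φT.comp v := by
    apply comp_right_cancel hudeg
    rw [Polynomial.comp_assoc, ← hcomm, ← Polynomial.comp_assoc, hva, hcommφa, ← hva,
      ← Polynomial.comp_assoc]
  refine ⟨a, ha0, v, hv0, hvlin, hvψ, ?_, ?_⟩
  · intro x
    rw [← Polynomial.aeval_comp, hva, aeval_phiA]
  · intro x
    rw [← Polynomial.aeval_comp, huv, aeval_phiA]
end
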